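/- arXiv:2301.13192 — 9 statements merged into one kernel-verified Lean document; each statement's English description precedes it below -/
import Mathlib

section
/- Let f : ℝ^p → ℝ be twice continuously differentiable with ∇²f(θ) ⪰ m·I for all θ (where m > 0) and with L-Lipschitz Hessian, and let θ* be its global minimizer. Fix κ₁ ∈ (0, 1/2) and set η = (m²/(8L))·min{3(1 − 2κ₁), 2}. Let γ_g, γ_h ≥ 0 satisfy γ_g ≤ η and γ_h ≤ m/2, and let (θ_t)_{t≥0} be a sequence satisfying θ_{t+1} = θ_t − H(θ_t)⁻¹ g(θ_t) for every t, where for every t the maps g and H satisfy ‖g(θ_t) − ∇f(θ_t)‖₂ ≤ γ_g and ‖H(θ_t) − ∇²f(θ_t)‖₂ ≤ γ_h. Define c₂ = η·(4γ_g L/m² + 2γ_h/m) + 2Lγ_g²/m² + γ_g + 2γ_g γ_h/m and suppose c₂ ≤ min{η/2, m²/(24L)}. If ‖∇f(θ₀)‖₂ < η, then for every t ≥ 1 one has ‖∇f(θ_t)‖₂ < η and ‖θ_t − θ*‖₂ ≤ (m/L)·(1/2)^{2^t} + 6c₂/m. -/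
/-! With `w = H(θ)⁻¹ g(θ)`, the step error splits into the second-order Taylor remainder of `∇f`
(at most `L/2 ‖w‖²` by the Lipschitz Hessian), the gradient error `γ_g` and the Hessian error
`γ_h ‖w‖`; since `H(θ)` is `m/2`-coercive, `‖w‖ ≤ 2(‖∇f(θ)‖ + γ_g)/m`. As long as `‖∇f(θ_t)‖ ≤ η`
the cross terms are absorbed into `c₂`, leaving the scalar recursion
`G_{t+1} ≤ K G_t² + c₂` for `G_t = ‖∇f(θ_t)‖` and `K = 2L/m²`. Because `2Kη ≤ 1` and `2c₂ ≤ η`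
this keeps `G_t < η`, and because `12 K c₂ ≤ 1` it forces `K G_t ≤ (1/2)^(2^t) + 2 K c₂`.
Strong convexity finally gives `m ‖θ_t - θ*‖ ≤ G_t`. -/

open scoped RealInnerProductSpace

/-- The Hessian of `f`, as the Fréchet derivative of the gradient. -/
noncomputable def hessianOf {p : ℕ} (f : EuclideanSpace ℝ (Fin p) → ℝ)
    (θ : EuclideanSpace ℝ (Fin p)) :
    EuclideanSpace ℝ (Fin p) →L[ℝ] EuclideanSpace ℝ (Fin p) :=
  fderiv ℝ (gradient f) θ

section Taylor

variable {E F : Type*} [NormedAddCommGroup E] [NormedSpace ℝ E]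
  [NormedAddCommGroup F] [NormedSpace ℝ F]

theorem norm_sub_sub_fderiv_le_of_lipschitz_fderiv {φ : E → F} {φ' : E → E →L[ℝ] F} {L : ℝ}
    (hφ : ∀ x, HasFDerivAt φ (φ' x) x) (hlip : ∀ x y, ‖φ' x - φ' y‖ ≤ L * ‖x - y‖) (x v : E) :
    ‖φ (x + v) - φ x - φ' x v‖ ≤ L / 2 * ‖v‖ ^ 2 := by
  set r : ℝ → F := fun s => φ (x + s • v) - φ x - s • φ' x v
  have hr : ∀ s, HasDerivAt r (φ' (x + s • v) v - φ' x v) s := fun s => by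
    have hline : HasDerivAt (fun s : ℝ => x + s • v) v s := by
      simpa using ((hasDerivAt_id s).smul_const v).const_add x
    have := (((hφ _).comp_hasDerivAt s hline).sub_const (φ x)).sub
      ((hasDerivAt_id s).smul_const (φ' x v))
    rwa [one_smul] at this
  have hbound : ∀ s ∈ Set.Ico (0 : ℝ) 1, ‖φ' (x + s • v) v - φ' x v‖ ≤ L * ‖v‖ ^ 2 * s := by
    rintro s ⟨hs, -⟩
    calc ‖φ' (x + s • v) v - φ' x v‖ ≤ ‖φ' (x + s • v) - φ' x‖ * ‖v‖ := by
          simpa using (φ' (x + s • v) - φ' x).le_opNorm v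
      _ ≤ L * ‖x + s • v - x‖ * ‖v‖ := by gcongr; exact hlip _ _
      _ = L * ‖v‖ ^ 2 * s := by
          rw [add_sub_cancel_left, norm_smul, Real.norm_of_nonneg hs]; ring
  have hB : ∀ s, HasDerivAt (fun s : ℝ => L * ‖v‖ ^ 2 * (s ^ 2 / 2)) (L * ‖v‖ ^ 2 * s) s :=
    fun s => by simpa using ((hasDerivAt_pow 2 s).div_const 2).const_mul (L * ‖v‖ ^ 2)
  have := image_norm_le_of_norm_deriv_right_le_deriv_boundary
    (fun s _ => (hr s).continuousAt.continuousWithinAt) (fun s _ => (hr s).hasDerivWithinAt)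
    (by simp [r]) hB hbound (x := 1) (by simp)
  simpa [r] using this.trans_eq (by ring : L * ‖v‖ ^ 2 * (1 ^ 2 / 2) = L / 2 * ‖v‖ ^ 2)

end Taylor

section InnerProductSpace

variable {E : Type*} [NormedAddCommGroup E] [InnerProductSpace ℝ E]

theorem mul_norm_le_norm_of_mul_sq_le_inner {c : ℝ} {u d : E} (h : c * ‖d‖ ^ 2 ≤ ⟪u, d⟫) :
    c * ‖d‖ ≤ ‖u‖ := by
  rcases (norm_nonneg d).eq_or_lt with hd | hd
  · simp [← hd]
  · refine le_of_mul_le_mul_right ?_ hd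
    calc c * ‖d‖ * ‖d‖ = c * ‖d‖ ^ 2 := by ring
      _ ≤ ‖u‖ * ‖d‖ := h.trans (real_inner_le_norm u d)

theorem mul_sq_norm_sub_le_inner_sub_of_coercive_fderiv {F : E → E} {F' : E → E →L[ℝ] E}
    {m : ℝ} (hF : ∀ x, HasFDerivAt F (F' x) x) (hcoer : ∀ x v, m * ‖v‖ ^ 2 ≤ ⟪F' x v, v⟫)
    (x y : E) : m * ‖y - x‖ ^ 2 ≤ ⟪F y - F x, y - x⟫ := by
  set d := y - x
  set ψ : ℝ → ℝ := fun s => ⟪F (x + s • d), d⟫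
  have hψ : ∀ s, HasDerivAt ψ ⟪F' (x + s • d) d, d⟫ s := fun s => by
    have hline : HasDerivAt (fun s : ℝ => x + s • d) d s := by
      simpa using ((hasDerivAt_id s).smul_const d).const_add x
    simpa using ((hF _).comp_hasDerivAt s hline).inner ℝ (hasDerivAt_const s d)
  obtain ⟨s, -, hs⟩ := exists_hasDerivAt_eq_slope ψ _ zero_lt_one
    (fun s _ => (hψ s).continuousAt.continuousWithinAt) (fun s _ => hψ s)
  have hslope : ψ 1 - ψ 0 = ⟪F y - F x, d⟫ := by simp [ψ, d, inner_sub_left]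
  calc m * ‖d‖ ^ 2 ≤ ⟪F' (x + s • d) d, d⟫ := hcoer _ _
    _ = ⟪F y - F x, d⟫ := by rw [hs, ← hslope]; ring

theorem mul_norm_sub_le_norm_sub_of_coercive_fderiv {F : E → E} {F' : E → E →L[ℝ] E}
    {m : ℝ} (hF : ∀ x, HasFDerivAt F (F' x) x) (hcoer : ∀ x v, m * ‖v‖ ^ 2 ≤ ⟪F' x v, v⟫)
    (x y : E) : m * ‖y - x‖ ≤ ‖F y - F x‖ :=
  mul_norm_le_norm_of_mul_sq_le_inner (mul_sq_norm_sub_le_inner_sub_of_coercive_fderiv hF hcoer x y)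

namespace ContinuousLinearMap

theorem sub_mul_sq_le_inner_of_norm_sub_le {A B : E →L[ℝ] E} {c δ : ℝ}
    (hA : ∀ v, c * ‖v‖ ^ 2 ≤ ⟪A v, v⟫) (hB : ‖B - A‖ ≤ δ) (v : E) :
    (c - δ) * ‖v‖ ^ 2 ≤ ⟪B v, v⟫ := by
  have hpert : |⟪(B - A) v, v⟫| ≤ δ * ‖v‖ ^ 2 :=
    calc |⟪(B - A) v, v⟫| ≤ ‖(B - A) v‖ * ‖v‖ := abs_real_inner_le_norm _ _
      _ ≤ ‖B - A‖ * ‖v‖ * ‖v‖ := by gcongr; exact le_opNorm _ _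
      _ ≤ δ * ‖v‖ ^ 2 := by rw [mul_assoc, ← sq]; gcongr
  have hsplit : ⟪B v, v⟫ = ⟪A v, v⟫ + ⟪(B - A) v, v⟫ := by
    rw [sub_apply, inner_sub_left]; ring
  linarith [abs_le.mp hpert, hA v]

end ContinuousLinearMap

variable [CompleteSpace E]

namespace ContinuousLinearMap

theorem isInvertible_of_coercive (A : E →L[ℝ] E) {c : ℝ} (hc : 0 < c)
    (hA : ∀ v, c * ‖v‖ ^ 2 ≤ ⟪A v, v⟫) : A.IsInvertible := by
  obtain ⟨u, hu⟩ := isUnit_of_forall_le_norm_inner_map A (c := ⟨c, hc.le⟩) hc fun v =>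
    (mul_comm _ c).trans_le ((hA v).trans (Real.le_norm_self _))
  exact ⟨ContinuousLinearEquiv.unitsEquiv ℝ E u, hu ▸ rfl⟩

theorem mul_norm_inverse_apply_le_of_coercive (A : E →L[ℝ] E) {c : ℝ} (hc : 0 < c)
    (hA : ∀ v, c * ‖v‖ ^ 2 ≤ ⟪A v, v⟫) (u : E) : c * ‖A.inverse u‖ ≤ ‖u‖ := by
  simpa [(A.isInvertible_of_coercive hc hA).self_apply_inverse] using
    mul_norm_le_norm_of_mul_sq_le_inner (hA (A.inverse u))

end ContinuousLinearMap

theorem norm_apply_newton_step_le {F : E → E} {F' : E → E →L[ℝ] E} {m L γg γh : ℝ}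
    (hm : 0 < m) (hL : 0 ≤ L) (hF : ∀ x, HasFDerivAt F (F' x) x)
    (hcoer : ∀ x v, m * ‖v‖ ^ 2 ≤ ⟪F' x v, v⟫) (hlip : ∀ x y, ‖F' x - F' y‖ ≤ L * ‖x - y‖)
    {x g : E} {H : E →L[ℝ] E} (hg : ‖g - F x‖ ≤ γg) (hH : ‖H - F' x‖ ≤ γh) (hγh : γh ≤ m / 2) :
    ‖F (x - H.inverse g)‖ ≤
      γg + 2 * γh * (‖F x‖ + γg) / m + 2 * L * (‖F x‖ + γg) ^ 2 / m ^ 2 := by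
  have hHcoer : ∀ v, m / 2 * ‖v‖ ^ 2 ≤ ⟪H v, v⟫ := fun v =>
    (mul_le_mul_of_nonneg_right (by linarith) (sq_nonneg _)).trans
      ((F' x).sub_mul_sq_le_inner_of_norm_sub_le (hcoer x) hH v)
  set w := H.inverse g
  have hHw : H w = g := (H.isInvertible_of_coercive (half_pos hm) hHcoer).self_apply_inverse g
  have hw : ‖w‖ ≤ 2 * (‖F x‖ + γg) / m := by
    have := H.mul_norm_inverse_apply_le_of_coercive (half_pos hm) hHcoer g
    have hgn : ‖g‖ ≤ ‖F x‖ + γg := by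
      simpa using (norm_add_le (g - F x) (F x)).trans (by linarith)
    rw [le_div_iff₀ hm]; linarith
  have hsplit : F (x - w) =
      (F (x + -w) - F x - F' x (-w)) + (F x - g) + (H - F' x) w := by
    rw [sub_apply, hHw, map_neg, ← sub_eq_add_neg]; abel
  have hγh0 : 0 ≤ γh := (norm_nonneg _).trans hH
  calc ‖F (x - w)‖ ≤ L / 2 * ‖w‖ ^ 2 + γg + γh * ‖w‖ := by
        rw [hsplit]
        refine (norm_add₃_le).trans (add_le_add_three ?_ ?_ ?_)
        · simpa using norm_sub_sub_fderiv_le_of_lipschitz_fderiv hF hlip x (-w)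
        · rwa [norm_sub_rev]
        · exact ((H - F' x).le_opNorm w).trans (by gcongr)
    _ ≤ L / 2 * (2 * (‖F x‖ + γg) / m) ^ 2 + γg + γh * (2 * (‖F x‖ + γg) / m) := by gcongr
    _ = _ := by field_simp; ring

theorem IsLocalMin.gradient_eq_zero {f : E → ℝ} {x : E} (h : IsLocalMin f x) :
    gradient f x = 0 := by
  simp [gradient, h.fderiv_eq_zero]

theorem ContDiff.differentiable_gradient {f : E → ℝ} (hf : ContDiff ℝ 2 f) :
    Differentiable ℝ (gradient f) :=
  (InnerProductSpace.toDual ℝ E).symm.toContinuousLinearEquiv.differentiable.comp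
    ((hf.fderiv_right (m := 1) (by norm_num)).differentiable (by norm_num))

end InnerProductSpace

theorem forall_lt_of_le_mul_sq_add {G : ℕ → ℝ} {K c η : ℝ} (hK : 0 ≤ K) (hKη : 2 * K * η ≤ 1)
    (hc : 2 * c ≤ η) (hG : ∀ t, 0 ≤ G t) (hstep : ∀ t, G t ≤ η → G (t + 1) ≤ K * G t ^ 2 + c)
    (h0 : G 0 < η) : ∀ t, G t < η
  | 0 => h0
  | t + 1 => by
    have ih := forall_lt_of_le_mul_sq_add hK hKη hc hG hstep h0 t
    have hsq : K * G t ^ 2 ≤ G t / 2 :=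
      calc K * G t ^ 2 = K * G t * G t := by ring
        _ ≤ K * η * G t := by gcongr; exact hG t
        _ ≤ G t / 2 := by nlinarith [hG t]
    linarith [hstep t ih.le]

theorem le_half_pow_two_pow_add_of_le_sq_add {u : ℕ → ℝ} {δ : ℝ} (hδ : 0 ≤ δ)
    (hδ' : 12 * δ ≤ 1) (hu : ∀ t, 0 ≤ u t) (h0 : u 0 ≤ 1 / 2)
    (hstep : ∀ t, u (t + 1) ≤ u t ^ 2 + δ) : ∀ t, 1 ≤ t → u t ≤ (1 / 2) ^ 2 ^ t + 2 * δ := by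
  have h1 : u 1 ≤ 1 / 4 + δ := by
    nlinarith [hstep 0, pow_le_pow_left₀ (hu 0) h0 2]
  have h2 : u 2 ≤ 1 / 16 + 2 * δ := by
    nlinarith [hstep 1, pow_le_pow_left₀ (hu 1) h1 2]
  -- The induction step needs `(1/2)^2^t ≤ 1/16`, so it can only start at `t = 2`.
  have hfrom2 : ∀ t, 2 ≤ t → u t ≤ (1 / 2) ^ 2 ^ t + 2 * δ := by
    intro t ht
    induction t, ht using Nat.le_induction with
    | base => linarith [show ((1 : ℝ) / 2) ^ 2 ^ 2 = 1 / 16 by norm_num]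
    | succ t ht ih =>
      set a : ℝ := (1 / 2) ^ 2 ^ t
      have ha : a ≤ 1 / 16 := calc
        a ≤ (1 / 2) ^ 2 ^ 2 := pow_le_pow_of_le_one (by norm_num) (by norm_num)
          (Nat.pow_le_pow_right (by norm_num) ht)
        _ = 1 / 16 := by norm_num
      rw [pow_succ, pow_mul]
      nlinarith [hstep t, pow_le_pow_left₀ (hu t) ih 2, show 0 ≤ a by positivity]
  intro t ht
  rcases ht.eq_or_lt with rfl | ht
  · linarith [show ((1 : ℝ) / 2) ^ 2 ^ 1 = 1 / 4 by norm_num]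
  · exact hfrom2 t ht

theorem residual_le_mul_sq_add_of_le {m L γg γh η c G : ℝ} (hm : 0 < m) (hL : 0 ≤ L)
    (hγg : 0 ≤ γg) (hγh : 0 ≤ γh) (hG : G ≤ η)
    (hc : c = η * (4 * γg * L / m ^ 2 + 2 * γh / m) + 2 * L * γg ^ 2 / m ^ 2
      + γg + 2 * γg * γh / m) :
    γg + 2 * γh * (G + γg) / m + 2 * L * (G + γg) ^ 2 / m ^ 2 ≤ 2 * L / m ^ 2 * G ^ 2 + c := by
  have hgap : 2 * L / m ^ 2 * G ^ 2 + c
      - (γg + 2 * γh * (G + γg) / m + 2 * L * (G + γg) ^ 2 / m ^ 2)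
      = (η - G) * (4 * γg * L / m ^ 2 + 2 * γh / m) := by
    rw [hc]; field_simp; ring
  have : 0 ≤ (η - G) * (4 * γg * L / m ^ 2 + 2 * γh / m) :=
    mul_nonneg (sub_nonneg.2 hG) (by positivity)
  linarith

theorem hasFDerivAt_gradient_hessianOf {p : ℕ} {f : EuclideanSpace ℝ (Fin p) → ℝ}
    (hf : ContDiff ℝ 2 f) (x : EuclideanSpace ℝ (Fin p)) :
    HasFDerivAt (gradient f) (hessianOf f x) x :=
  (hf.differentiable_gradient x).hasFDerivAt

theorem robust_newton_pure_phase_general {p : ℕ} (f : EuclideanSpace ℝ (Fin p) → ℝ)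
    (m L κ₁ η γg γh c₂ : ℝ) (hm : 0 < m) (hL : 0 < L)
    (hf : ContDiff ℝ 2 f)
    (hconv : ∀ θ v : EuclideanSpace ℝ (Fin p), m * ‖v‖ ^ 2 ≤ ⟪hessianOf f θ v, v⟫)
    (hlip : ∀ θ₁ θ₂ : EuclideanSpace ℝ (Fin p),
      ‖hessianOf f θ₁ - hessianOf f θ₂‖ ≤ L * ‖θ₁ - θ₂‖)
    (θstar : EuclideanSpace ℝ (Fin p)) (hmin : ∀ θ', f θstar ≤ f θ')
    (hη : η = m ^ 2 / (8 * L) * min (3 * (1 - 2 * κ₁)) 2)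
    (hγg0 : 0 ≤ γg) (hγh0 : 0 ≤ γh) (hγhm : γh ≤ m / 2)
    (g : EuclideanSpace ℝ (Fin p) → EuclideanSpace ℝ (Fin p))
    (H : EuclideanSpace ℝ (Fin p) →
      EuclideanSpace ℝ (Fin p) →L[ℝ] EuclideanSpace ℝ (Fin p))
    (θ : ℕ → EuclideanSpace ℝ (Fin p))
    (hupd : ∀ t, θ (t + 1) = θ t - (H (θ t)).inverse (g (θ t)))
    (hg : ∀ t, ‖g (θ t) - gradient f (θ t)‖ ≤ γg)
    (hH : ∀ t, ‖H (θ t) - hessianOf f (θ t)‖ ≤ γh)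
    (hc₂ : c₂ = η * (4 * γg * L / m ^ 2 + 2 * γh / m) + 2 * L * γg ^ 2 / m ^ 2
      + γg + 2 * γg * γh / m)
    (hc₂small : c₂ ≤ min (η / 2) (m ^ 2 / (24 * L)))
    (h0 : ‖gradient f (θ 0)‖ < η) :
    ∀ t : ℕ, 1 ≤ t → ‖gradient f (θ t)‖ < η ∧
      ‖θ t - θstar‖ ≤ m / L * (1 / 2 : ℝ) ^ 2 ^ t + 6 * c₂ / m := by
  set G := fun t => ‖gradient f (θ t)‖
  set K := 2 * L / m ^ 2
  have hK : 0 < K := by positivity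
  have hgrad := hasFDerivAt_gradient_hessianOf hf
  have hstep : ∀ t, G t ≤ η → G (t + 1) ≤ K * G t ^ 2 + c₂ := fun t ht => by
    simpa [G, hupd t] using (norm_apply_newton_step_le hm hL.le hgrad hconv hlip (hg t) (hH t)
      hγhm).trans (residual_le_mul_sq_add_of_le hm hL.le hγg0 hγh0 ht hc₂)
  have hKη : 2 * K * η ≤ 1 := by
    have : η ≤ m ^ 2 / (8 * L) * 2 :=
      hη ▸ mul_le_mul_of_nonneg_left (min_le_right _ _) (by positivity)
    calc 2 * K * η ≤ 2 * K * (m ^ 2 / (8 * L) * 2) := by gcongr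
      _ = 1 := by simp only [K]; field_simp; ring
  have hc₂η : 2 * c₂ ≤ η := by linarith [hc₂small.trans (min_le_left _ _)]
  have hKc₂ : 12 * (K * c₂) ≤ 1 :=
    calc 12 * (K * c₂) ≤ 12 * (K * (m ^ 2 / (24 * L))) := by
          gcongr; exact hc₂small.trans (min_le_right _ _)
      _ = 1 := by simp only [K]; field_simp; ring
  have hsmall := forall_lt_of_le_mul_sq_add hK.le hKη hc₂η (fun t => norm_nonneg _) hstep h0
  have hc₂0 : 0 ≤ c₂ := by
    have hη0 : 0 ≤ η := (norm_nonneg _).trans h0.le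
    rw [hc₂]; positivity
  have hquad := le_half_pow_two_pow_add_of_le_sq_add (u := fun t => K * G t)
    (mul_nonneg hK.le hc₂0) hKc₂ (fun t => by positivity) (by nlinarith [hsmall 0])
    (fun t => by nlinarith [hstep t (hsmall t).le])
  intro t ht
  refine ⟨hsmall t, ?_⟩
  have hdist : m * ‖θ t - θstar‖ ≤ G t := by
    simpa [(IsLocalMin.gradient_eq_zero (Filter.Eventually.of_forall hmin))] using
      mul_norm_sub_le_norm_sub_of_coercive_fderiv hgrad hconv θstar (θ t)
  calc ‖θ t - θstar‖ ≤ G t / m := by rw [le_div_iff₀ hm]; linarith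
    _ ≤ ((1 / 2) ^ 2 ^ t + 2 * (K * c₂)) / K / m := by
        gcongr; rw [le_div_iff₀ hK]; linarith [hquad t ht]
    _ = m / (2 * L) * (1 / 2) ^ 2 ^ t + 2 * c₂ / m := by simp only [K]; field_simp
    _ ≤ m / L * (1 / 2 : ℝ) ^ 2 ^ t + 6 * c₂ / m := by gcongr <;> linarith

/-- pure Newton phase of robust Newton's method — unit steps keep the
gradient small and the iterates converge quadratically to a ball around `θ*`. -/
theorem robust_newton_pure_phase {p : ℕ} (f : EuclideanSpace ℝ (Fin p) → ℝ)
    (m L κ₁ η γg γh c₂ : ℝ) (hm : 0 < m) (hL : 0 < L)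
    (hκ₁ : κ₁ ∈ Set.Ioo (0 : ℝ) (1 / 2))
    (hf : ContDiff ℝ 2 f)
    (hconv : ∀ θ v : EuclideanSpace ℝ (Fin p), m * ‖v‖ ^ 2 ≤ ⟪hessianOf f θ v, v⟫)
    (hlip : ∀ θ₁ θ₂ : EuclideanSpace ℝ (Fin p),
      ‖hessianOf f θ₁ - hessianOf f θ₂‖ ≤ L * ‖θ₁ - θ₂‖)
    (θstar : EuclideanSpace ℝ (Fin p)) (hmin : ∀ θ', f θstar ≤ f θ')
    (hη : η = m ^ 2 / (8 * L) * min (3 * (1 - 2 * κ₁)) 2)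
    (hγg0 : 0 ≤ γg) (hγh0 : 0 ≤ γh) (hγgη : γg ≤ η) (hγhm : γh ≤ m / 2)
    (g : EuclideanSpace ℝ (Fin p) → EuclideanSpace ℝ (Fin p))
    (H : EuclideanSpace ℝ (Fin p) →
      EuclideanSpace ℝ (Fin p) →L[ℝ] EuclideanSpace ℝ (Fin p))
    (θ : ℕ → EuclideanSpace ℝ (Fin p))
    (hupd : ∀ t, θ (t + 1) = θ t - (H (θ t)).inverse (g (θ t)))
    (hg : ∀ t, ‖g (θ t) - gradient f (θ t)‖ ≤ γg)
    (hH : ∀ t, ‖H (θ t) - hessianOf f (θ t)‖ ≤ γh)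
    (hc₂ : c₂ = η * (4 * γg * L / m ^ 2 + 2 * γh / m) + 2 * L * γg ^ 2 / m ^ 2
      + γg + 2 * γg * γh / m)
    (hc₂small : c₂ ≤ min (η / 2) (m ^ 2 / (24 * L)))
    (h0 : ‖gradient f (θ 0)‖ < η) :
    ∀ t : ℕ, 1 ≤ t → ‖gradient f (θ t)‖ < η ∧
      ‖θ t - θstar‖ ≤ m / L * (1 / 2 : ℝ) ^ 2 ^ t + 6 * c₂ / m :=
  robust_newton_pure_phase_general f m L κ₁ η γg γh c₂ hm hL hf hconv hlip θstar hmin hη hγg0 hγh0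
    hγhm g H θ hupd hg hH hc₂ hc₂small h0
end

section
/- Let f : ℝ^p → ℝ be twice continuously differentiable with ∇²f(θ) ⪰ m·I for all θ (m > 0) and with L-Lipschitz Hessian. Let θ ∈ ℝ^p with ‖∇f(θ)‖₂ ≤ η for some η > 0, and suppose g(θ) ∈ ℝ^p and H(θ) ∈ ℝ^{p×p} satisfy ‖g(θ) − ∇f(θ)‖₂ ≤ γ_g and ‖H(θ) − ∇²f(θ)‖₂ ≤ γ_h ≤ m/2. Then, with Δθ_nt = −H(θ)⁻¹g(θ), one has ‖∇f(θ + Δθ_nt)‖₂ ≤ (2L/m²)‖∇f(θ)‖₂² + η·(4γ_g L/m² + 2γ_h/m) + 2Lγ_g²/m² + γ_g + 2γ_g γ_h/m. -/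
open scoped RealInnerProductSpace

/-!
Since `‖H - ∇²f(θ)‖ ≤ γh ≤ m / 2`, the operator `H` is coercive with constant `m / 2`; hence it is
invertible and `‖Δ‖ ≤ (2 / m) ‖g‖ ≤ (2 / m) (‖∇f(θ)‖ + γg)`. As `H Δ = -g`, the new gradient
`∇f(θ + Δ)` is the Taylor remainder `∇f(θ + Δ) - ∇f(θ) - ∇²f(θ) Δ`, of norm at most `(L / 2) ‖Δ‖²`,
minus `g - ∇f(θ)` and `(H - ∇²f(θ)) Δ`. Inserting the bound on `‖Δ‖` gives the claim.
-/

section Taylor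

variable {E F : Type*} [NormedAddCommGroup E] [NormedSpace ℝ E]
  [NormedAddCommGroup F] [NormedSpace ℝ F]
  {G : E → F} {G' : E → E →L[ℝ] F} {L : ℝ}

theorem norm_image_add_sub_sub_le_of_lipschitz_fderiv (hG : ∀ x, HasFDerivAt G (G' x) x)
    (hG' : ∀ x y, ‖G' x - G' y‖ ≤ L * ‖x - y‖) (x h : E) :
    ‖G (x + h) - G x - G' x h‖ ≤ L / 2 * ‖h‖ ^ 2 := by
  -- Comparing with `(L / 2) ‖h‖² t²` rather than using the mean value inequality gives `L / 2`.
  set φ : ℝ → F := fun t => G (x + t • h) - G x - t • G' x h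
  have hφ : ∀ t, HasDerivAt φ (G' (x + t • h) h - G' x h) t := fun t => by
    have hline : HasDerivAt (fun s : ℝ => x + s • h) h t := by
      simpa using ((hasDerivAt_id t).smul_const h).const_add x
    exact (((hG _).comp_hasDerivAt t hline).sub_const (G x)).sub
      (by simpa using (hasDerivAt_id t).smul_const (G' x h))
  have hB : ∀ t, HasDerivAt (fun t : ℝ => L / 2 * ‖h‖ ^ 2 * t ^ 2) (L * ‖h‖ ^ 2 * t) t :=
    fun t => ((hasDerivAt_pow 2 t).const_mul _).congr_deriv (by push_cast; ring)
  have hbound : ∀ t ∈ Set.Ico (0 : ℝ) 1, ‖G' (x + t • h) h - G' x h‖ ≤ L * ‖h‖ ^ 2 * t := by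
    rintro t ⟨ht, -⟩
    calc ‖G' (x + t • h) h - G' x h‖ = ‖(G' (x + t • h) - G' x) h‖ := rfl
      _ ≤ L * ‖x + t • h - x‖ * ‖h‖ := (G' _ - G' x).le_of_opNorm_le (hG' _ _) h
      _ = L * ‖h‖ ^ 2 * t := by rw [add_sub_cancel_left, norm_smul, Real.norm_of_nonneg ht]; ring
  simpa [φ] using image_norm_le_of_norm_deriv_right_le_deriv_boundary
    (fun t _ => (hφ t).continuousAt.continuousWithinAt) (fun t _ => (hφ t).hasDerivWithinAt)
    (by simp [φ]) hB hbound (Set.right_mem_Icc.2 zero_le_one)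

theorem norm_image_add_le_of_inexact_newton_step (hG : ∀ x, HasFDerivAt G (G' x) x)
    (hG' : ∀ x y, ‖G' x - G' y‖ ≤ L * ‖x - y‖) {x Δ : E} {g : F} {H : E →L[ℝ] F} {γg γh : ℝ}
    (hg : ‖g - G x‖ ≤ γg) (hH : ‖H - G' x‖ ≤ γh) (hΔ : H Δ = -g) :
    ‖G (x + Δ)‖ ≤ L / 2 * ‖Δ‖ ^ 2 + γg + γh * ‖Δ‖ := by
  have hsplit : G (x + Δ) = (G (x + Δ) - G x - G' x Δ) - (g - G x) - (H - G' x) Δ := by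
    rw [sub_apply, hΔ]; abel
  calc ‖G (x + Δ)‖
      ≤ ‖G (x + Δ) - G x - G' x Δ‖ + ‖g - G x‖ + ‖(H - G' x) Δ‖ := by
        rw [congrArg norm hsplit]
        exact (norm_sub_le _ _).trans (add_le_add (norm_sub_le _ _) le_rfl)
    _ ≤ L / 2 * ‖Δ‖ ^ 2 + γg + γh * ‖Δ‖ := by
        gcongr
        · exact norm_image_add_sub_sub_le_of_lipschitz_fderiv hG hG' x Δ
        · exact (H - G' x).le_of_opNorm_le hH Δ

end Taylor

section Coercive

variable {E : Type*} [NormedAddCommGroup E] [InnerProductSpace ℝ E] {A T : E →L[ℝ] E} {c γ : ℝ}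

theorem le_inner_map_of_norm_sub_le (hA : ∀ v, c * ‖v‖ ^ 2 ≤ ⟪A v, v⟫) (hT : ‖T - A‖ ≤ γ)
    (v : E) : (c - γ) * ‖v‖ ^ 2 ≤ ⟪T v, v⟫ := by
  have hpert : |⟪(T - A) v, v⟫| ≤ γ * ‖v‖ ^ 2 :=
    calc |⟪(T - A) v, v⟫| ≤ ‖(T - A) v‖ * ‖v‖ := abs_real_inner_le_norm _ _
      _ ≤ γ * ‖v‖ * ‖v‖ := by gcongr; exact (T - A).le_of_opNorm_le hT v
      _ = γ * ‖v‖ ^ 2 := by ring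
  have hsplit : ⟪T v, v⟫ = ⟪A v, v⟫ + ⟪(T - A) v, v⟫ := by
    rw [sub_apply, inner_sub_left]; ring
  linarith [(abs_le.mp hpert).1, hA v]

theorem mul_norm_le_norm_apply_of_le_inner_map (hT : ∀ v, c * ‖v‖ ^ 2 ≤ ⟪T v, v⟫) (v : E) :
    c * ‖v‖ ≤ ‖T v‖ := by
  rcases (norm_nonneg v).eq_or_lt with hv | hv
  · rw [← hv, mul_zero]; exact norm_nonneg _
  · refine le_of_mul_le_mul_right ?_ hv
    calc c * ‖v‖ * ‖v‖ = c * ‖v‖ ^ 2 := by ring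
      _ ≤ ⟪T v, v⟫ := hT v
      _ ≤ ‖T v‖ * ‖v‖ := real_inner_le_norm _ _

theorem apply_inverse_of_le_inner_map [CompleteSpace E] (hc : 0 < c)
    (hT : ∀ v, c * ‖v‖ ^ 2 ≤ ⟪T v, v⟫) (y : E) : T (T.inverse y) = y := by
  have hunit : IsUnit T := T.isUnit_of_forall_le_norm_inner_map (c := c.toNNReal)
    (Real.toNNReal_pos.2 hc) fun v => by
      rw [Real.coe_toNNReal _ hc.le, mul_comm]; exact (hT v).trans (Real.le_norm_self _)
  rw [← ContinuousLinearMap.ringInverse_eq_inverse]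
  exact DFunLike.congr_fun (Ring.mul_inverse_cancel T hunit) y

end Coercive

theorem differentiable_gradient_of_contDiff {E : Type*} [NormedAddCommGroup E]
    [InnerProductSpace ℝ E] [CompleteSpace E] {f : E → ℝ} (hf : ContDiff ℝ 2 f) :
    Differentiable ℝ (gradient f) :=
  (InnerProductSpace.toDual ℝ E).symm.differentiable.comp
    ((hf.fderiv_right (m := 1) (by norm_num)).differentiable one_ne_zero)

theorem robust_newton_gradient_recursion_general {p : ℕ} (f : EuclideanSpace ℝ (Fin p) → ℝ)
    (m L η γg γh : ℝ) (hm : 0 < m) (hL : 0 < L)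
    (hf : ContDiff ℝ 2 f)
    (hconv : ∀ θ' v : EuclideanSpace ℝ (Fin p), m * ‖v‖ ^ 2 ≤ ⟪hessianOf f θ' v, v⟫)
    (hlip : ∀ θ₁ θ₂ : EuclideanSpace ℝ (Fin p),
      ‖hessianOf f θ₁ - hessianOf f θ₂‖ ≤ L * ‖θ₁ - θ₂‖)
    (θ : EuclideanSpace ℝ (Fin p)) (hθ : ‖gradient f θ‖ ≤ η)
    (g : EuclideanSpace ℝ (Fin p))
    (H : EuclideanSpace ℝ (Fin p) →L[ℝ] EuclideanSpace ℝ (Fin p))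
    (hg : ‖g - gradient f θ‖ ≤ γg) (hH : ‖H - hessianOf f θ‖ ≤ γh)
    (hγhm : γh ≤ m / 2)
    (Δ : EuclideanSpace ℝ (Fin p)) (hΔ : Δ = -(H.inverse g)) :
    ‖gradient f (θ + Δ)‖ ≤ 2 * L / m ^ 2 * ‖gradient f θ‖ ^ 2
      + η * (4 * γg * L / m ^ 2 + 2 * γh / m)
      + 2 * L * γg ^ 2 / m ^ 2 + γg + 2 * γg * γh / m := by
  have hγg : 0 ≤ γg := (norm_nonneg _).trans hg
  have hγh : 0 ≤ γh := (norm_nonneg _).trans hH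
  have hHcoer : ∀ v, m / 2 * ‖v‖ ^ 2 ≤ ⟪H v, v⟫ := fun v =>
    (le_inner_map_of_norm_sub_le (hconv θ) hH v).trans' (by gcongr; linarith)
  have hHΔ : H Δ = -g := by
    rw [hΔ, map_neg, apply_inverse_of_le_inner_map (by positivity) hHcoer]
  have hΔle : ‖Δ‖ ≤ 2 / m * (‖gradient f θ‖ + γg) := by
    have := mul_norm_le_norm_apply_of_le_inner_map hHcoer Δ
    rw [hHΔ, norm_neg] at this
    rw [div_mul_eq_mul_div, le_div_iff₀ hm]
    linarith [norm_le_norm_add_norm_sub' g (gradient f θ)]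
  set n := ‖gradient f θ‖
  calc ‖gradient f (θ + Δ)‖ ≤ L / 2 * ‖Δ‖ ^ 2 + γg + γh * ‖Δ‖ :=
        norm_image_add_le_of_inexact_newton_step
          (fun x => (differentiable_gradient_of_contDiff hf x).hasFDerivAt) hlip hg hH hHΔ
    _ ≤ L / 2 * (2 / m * (n + γg)) ^ 2 + γg + γh * (2 / m * (n + γg)) := by gcongr
    _ = 2 * L / m ^ 2 * n ^ 2 + n * (4 * γg * L / m ^ 2 + 2 * γh / m)
          + 2 * L * γg ^ 2 / m ^ 2 + γg + 2 * γg * γh / m := by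
        field_simp; ring
    _ ≤ _ := by gcongr

/-- bound on the gradient at the next noisy Newton iterate. -/
theorem robust_newton_gradient_recursion {p : ℕ} (f : EuclideanSpace ℝ (Fin p) → ℝ)
    (m L η γg γh : ℝ) (hm : 0 < m) (hL : 0 < L) (hηpos : 0 < η)
    (hf : ContDiff ℝ 2 f)
    (hconv : ∀ θ' v : EuclideanSpace ℝ (Fin p), m * ‖v‖ ^ 2 ≤ ⟪hessianOf f θ' v, v⟫)
    (hlip : ∀ θ₁ θ₂ : EuclideanSpace ℝ (Fin p),
      ‖hessianOf f θ₁ - hessianOf f θ₂‖ ≤ L * ‖θ₁ - θ₂‖)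
    (θ : EuclideanSpace ℝ (Fin p)) (hθ : ‖gradient f θ‖ ≤ η)
    (g : EuclideanSpace ℝ (Fin p))
    (H : EuclideanSpace ℝ (Fin p) →L[ℝ] EuclideanSpace ℝ (Fin p))
    (hg : ‖g - gradient f θ‖ ≤ γg) (hH : ‖H - hessianOf f θ‖ ≤ γh)
    (hγhm : γh ≤ m / 2)
    (Δ : EuclideanSpace ℝ (Fin p)) (hΔ : Δ = -(H.inverse g)) :
    ‖gradient f (θ + Δ)‖ ≤ 2 * L / m ^ 2 * ‖gradient f θ‖ ^ 2
      + η * (4 * γg * L / m ^ 2 + 2 * γh / m)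
      + 2 * L * γg ^ 2 / m ^ 2 + γg + 2 * γg * γh / m :=
  robust_newton_gradient_recursion_general f m L η γg γh hm hL hf hconv hlip θ hθ g H hg hH hγhm Δ
    hΔ
end

section
/- Let (y_t)_{t≥0} be a sequence of nonnegative real numbers, and let a, d ≥ 0 satisfy a ≤ 1/2, d ≤ a/2, and d ≤ 1/12. Suppose y₀ < a and y_{t+1} ≤ y_t² + d for every t ≥ 0. Then for every t ≥ 1 one has y_t < a and y_t ≤ y₀^{2^t} + 3d. -/
/-- the quadratic-convergence recursion lemma for the pure Newton phase. -/
theorem quadratic_recursion_lemma (y : ℕ → ℝ) (a d : ℝ)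
    (hy : ∀ t, 0 ≤ y t) (ha0 : 0 ≤ a) (hd0 : 0 ≤ d)
    (ha : a ≤ 1 / 2) (hda : d ≤ a / 2) (hd : d ≤ 1 / 12)
    (h0 : y 0 < a) (hrec : ∀ t : ℕ, y (t + 1) ≤ (y t) ^ 2 + d) :
    ∀ t : ℕ, 1 ≤ t → y t < a ∧ y t ≤ (y 0) ^ 2 ^ t + 3 * d := by
  have y0half : y 0 < 1 / 2 := lt_of_lt_of_le h0 ha
  have all_a : ∀ t, y t < a := by
    intro t
    induction t with
    | zero => exact h0
    | succ n ih =>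
      have := hrec n
      have h2 : (y n) ^ 2 + d < a := by nlinarith [hy n]
      linarith
  have key : ∀ t, 2 ≤ t → y t ≤ (y 0) ^ 2 ^ t + (19/12) * d ∧ (y 0) ^ 2 ^ t ≤ 1/16 := by
    intro t ht
    induction t with
    | zero => omega
    | succ n ih =>
      rcases Nat.lt_or_ge n 2 with hn | hn
      · -- n + 1 = 2, i.e. n = 1
        interval_cases n
        · omega
        · have h1 : y 1 ≤ (y 0) ^ 2 + d := hrec 0
          have h2 : y 2 ≤ (y 1) ^ 2 + d := hrec 1
          have hsq : (y 1) ^ 2 ≤ ((y 0) ^ 2 + d) ^ 2 := by nlinarith [hy 1, hy 0]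
          have h04 : (y 0) ^ 2 ^ 2 = ((y 0) ^ 2) ^ 2 := by ring
          have hq : (y 0) ^ 2 ≤ 1 / 4 := by nlinarith [hy 0]
          simp only [show (1:ℕ) + 1 = 2 from rfl]
          constructor
          · rw [h04]; nlinarith [hy 0, sq_nonneg (y 0), hq]
          · rw [h04]; nlinarith [hq, sq_nonneg (y 0)]
      · obtain ⟨h1, h2⟩ := ih hn
        have hpow : (y 0) ^ 2 ^ (n + 1) = ((y 0) ^ 2 ^ n) ^ 2 := by
          rw [pow_succ, pow_mul]
        have hx0 : 0 ≤ (y 0) ^ 2 ^ n := pow_nonneg (hy 0) _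
        have hr := hrec n
        have hsq : (y n) ^ 2 ≤ ((y 0) ^ 2 ^ n + (19/12) * d) ^ 2 := by
          nlinarith [hy n]
        constructor
        · rw [hpow]
          nlinarith [mul_nonneg hd0 hx0, sq_nonneg d, mul_nonneg hd0 hd0]
        · rw [hpow]
          nlinarith
  intro t ht
  rcases Nat.lt_or_ge t 2 with h | h
  · interval_cases t
    have := hrec 0
    refine ⟨all_a 1, ?_⟩
    have : (y 0) ^ 2 ^ 1 = (y 0) ^ 2 := by norm_num
    rw [this]
    nlinarith [hrec 0]
  · obtain ⟨h1, _⟩ := key t h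
    exact ⟨all_a t, by linarith⟩
end

section
/- Let f : ℝ^p → ℝ be twice continuously differentiable with ∇²f(θ) ⪰ m·I for all θ (m > 0). Let θ ∈ ℝ^p, and suppose g(θ) ∈ ℝ^p and H(θ) ∈ ℝ^{p×p} satisfy ‖g(θ) − ∇f(θ)‖₂ ≤ γ_g and ‖H(θ) − ∇²f(θ)‖₂ ≤ γ_h with γ_h < m. Set Δθ_nt = −H(θ)⁻¹g(θ) and λ̃(θ)² = g(θ)ᵀH(θ)⁻¹g(θ). Then ∇f(θ)ᵀΔθ_nt ≤ −λ̃(θ)² + γ_g·(‖∇f(θ)‖₂ + γ_g)/(m − γ_h). -/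
open scoped RealInnerProductSpace

/-- the true gradient is nearly a descent direction along the noisy
Newton step. -/
theorem noisy_newton_descent_direction {p : ℕ} (f : EuclideanSpace ℝ (Fin p) → ℝ)
    (m γg γh : ℝ) (hm : 0 < m)
    (hf : ContDiff ℝ 2 f)
    (hconv : ∀ θ' v : EuclideanSpace ℝ (Fin p), m * ‖v‖ ^ 2 ≤ ⟪hessianOf f θ' v, v⟫)
    (θ : EuclideanSpace ℝ (Fin p))
    (g : EuclideanSpace ℝ (Fin p))
    (H : EuclideanSpace ℝ (Fin p) →L[ℝ] EuclideanSpace ℝ (Fin p))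
    (hg : ‖g - gradient f θ‖ ≤ γg) (hH : ‖H - hessianOf f θ‖ ≤ γh)
    (hγhm : γh < m)
    (Δ : EuclideanSpace ℝ (Fin p)) (hΔ : Δ = -(H.inverse g))
    (lam2 : ℝ) (hlam2 : lam2 = ⟪g, H.inverse g⟫) :
    ⟪gradient f θ, Δ⟫ ≤ -lam2 + γg * (‖gradient f θ‖ + γg) / (m - γh) := by
  have hc : 0 < m - γh := by linarith
  have hγg : 0 ≤ γg := le_trans (norm_nonneg _) hg
  -- coercivity of H
  have hcoer : ∀ v : EuclideanSpace ℝ (Fin p), (m - γh) * ‖v‖ ^ 2 ≤ ⟪H v, v⟫ := by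
    intro v
    have h1 := hconv θ v
    have h2 : |⟪(H - hessianOf f θ) v, v⟫| ≤ γh * ‖v‖ ^ 2 := by
      calc |⟪(H - hessianOf f θ) v, v⟫| ≤ ‖(H - hessianOf f θ) v‖ * ‖v‖ :=
            abs_real_inner_le_norm _ _
        _ ≤ ‖H - hessianOf f θ‖ * ‖v‖ * ‖v‖ := by
            gcongr; exact (H - hessianOf f θ).le_opNorm v
        _ ≤ γh * ‖v‖ * ‖v‖ := by gcongr
        _ = γh * ‖v‖ ^ 2 := by ring
    have h3 : ⟪H v, v⟫ = ⟪hessianOf f θ v, v⟫ + ⟪(H - hessianOf f θ) v, v⟫ := by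
      rw [ContinuousLinearMap.sub_apply, inner_sub_left]; ring
    have h4 := abs_le.1 h2
    linarith [h4.1]
  -- H is injective, hence bijective
  have hinj : Function.Injective H := by
    intro a b hab
    have hz : H (a - b) = 0 := by simp [map_sub, hab]
    have := hcoer (a - b)
    rw [hz] at this
    simp only [inner_zero_left] at this
    have : ‖a - b‖ ^ 2 ≤ 0 := by nlinarith
    have : ‖a - b‖ = 0 := by nlinarith [norm_nonneg (a - b), sq_nonneg ‖a - b‖]
    exact sub_eq_zero.mp (norm_eq_zero.mp this)
  have hbij : Function.Bijective H.toLinearMap :=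
    ⟨hinj, (LinearMap.injective_iff_surjective).mp hinj⟩
  let e : EuclideanSpace ℝ (Fin p) ≃L[ℝ] EuclideanSpace ℝ (Fin p) :=
    (LinearEquiv.ofBijective H.toLinearMap hbij).toContinuousLinearEquiv
  have hHe : H = (e : EuclideanSpace ℝ (Fin p) →L[ℝ] EuclideanSpace ℝ (Fin p)) := by
    ext v; rfl
  have hHinv : H (H.inverse g) = g := by
    rw [hHe, ContinuousLinearMap.inverse_equiv]
    exact e.apply_symm_apply g
  set x := H.inverse g with hx
  -- norm bound on x
  have hxb : (m - γh) * ‖x‖ ≤ ‖g‖ := by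
    have h1 := hcoer x
    rw [hHinv] at h1
    have h2 : ⟪g, x⟫ ≤ ‖g‖ * ‖x‖ := real_inner_le_norm g x
    rcases eq_or_lt_of_le (norm_nonneg x) with h0 | h0
    · rw [← h0]; simpa using norm_nonneg g
    · nlinarith
  have hgb : ‖g‖ ≤ ‖gradient f θ‖ + γg := by
    have h0 : g = gradient f θ + (g - gradient f θ) := by abel
    calc ‖g‖ = ‖gradient f θ + (g - gradient f θ)‖ := by rw [← h0]
      _ ≤ ‖gradient f θ‖ + ‖g - gradient f θ‖ := norm_add_le _ _
      _ ≤ ‖gradient f θ‖ + γg := by linarith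
  have hxb2 : ‖x‖ ≤ (‖gradient f θ‖ + γg) / (m - γh) := by
    rw [le_div_iff₀ hc]; nlinarith
  -- main computation
  have hsplit : ⟪gradient f θ, Δ⟫ = -lam2 + ⟪g - gradient f θ, x⟫ := by
    rw [hΔ, hlam2, inner_neg_right, inner_sub_left]
    ring
  rw [hsplit]
  have hb : ⟪g - gradient f θ, x⟫ ≤ γg * ((‖gradient f θ‖ + γg) / (m - γh)) := by
    calc ⟪g - gradient f θ, x⟫ ≤ ‖g - gradient f θ‖ * ‖x‖ := real_inner_le_norm _ _
      _ ≤ γg * ((‖gradient f θ‖ + γg) / (m - γh)) :=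
          mul_le_mul hg hxb2 (norm_nonneg x) hγg
  have : γg * ((‖gradient f θ‖ + γg) / (m - γh)) = γg * (‖gradient f θ‖ + γg) / (m - γh) := by
    ring
  linarith
end

section
/- Let f : ℝ^p → ℝ be twice continuously differentiable with ∇²f(θ) ⪰ m·I for all θ (m > 0). Let θ ∈ ℝ^p, and suppose H(θ) ∈ ℝ^{p×p} satisfies ‖H(θ) − ∇²f(θ)‖₂ ≤ γ_h ≤ m/2, and let g(θ) ∈ ℝ^p be arbitrary. Set Δθ_nt = −H(θ)⁻¹g(θ) and λ̃(θ)² = g(θ)ᵀH(θ)⁻¹g(θ). Then Δθ_ntᵀ ∇²f(θ) Δθ_nt ≤ λ̃(θ)²·(1 + 2γ_h/m). -/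
open scoped RealInnerProductSpace

/-!
Write `x = H⁻¹ g`, so that `Δ = -x` and `λ̃² = ⟪H x, x⟫`. The quadratic forms of `H` and of the
Hessian `A` differ by at most `γ‖x‖²`, so `H` inherits the coercivity constant `m - γ ≥ m / 2`
(which also makes `H` invertible, by Lax–Milgram), whence `‖x‖² ≤ 2λ̃² / m` and
`⟪A x, x⟫ ≤ λ̃² + γ‖x‖² ≤ λ̃² (1 + 2γ / m)`.
-/

namespace ContinuousLinearMap

variable {E : Type*} [NormedAddCommGroup E] [InnerProductSpace ℝ E]

theorem abs_inner_map_self_le (T : E →L[ℝ] E) (v : E) : |⟪T v, v⟫| ≤ ‖T‖ * ‖v‖ ^ 2 :=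
  calc |⟪T v, v⟫| ≤ ‖T v‖ * ‖v‖ := abs_real_inner_le_norm _ _
    _ ≤ ‖T‖ * ‖v‖ * ‖v‖ := by gcongr; exact T.le_opNorm v
    _ = ‖T‖ * ‖v‖ ^ 2 := by ring

theorem inner_map_self_le_add_of_norm_sub_le {A H : E →L[ℝ] E} {γ : ℝ} (hH : ‖H - A‖ ≤ γ)
    (v : E) : ⟪A v, v⟫ ≤ ⟪H v, v⟫ + γ * ‖v‖ ^ 2 := by
  have hdiff : ⟪(H - A) v, v⟫ = ⟪H v, v⟫ - ⟪A v, v⟫ := by rw [sub_apply, inner_sub_left]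
  have hbound : |⟪(H - A) v, v⟫| ≤ γ * ‖v‖ ^ 2 :=
    ((H - A).abs_inner_map_self_le v).trans (by gcongr)
  linarith [(abs_le.mp hbound).1]

theorem half_mul_sq_norm_le_inner_map_self_of_norm_sub_le {A H : E →L[ℝ] E} {m γ : ℝ}
    (hA : ∀ v, m * ‖v‖ ^ 2 ≤ ⟪A v, v⟫) (hH : ‖H - A‖ ≤ γ) (hγ : γ ≤ m / 2) (v : E) :
    m / 2 * ‖v‖ ^ 2 ≤ ⟪H v, v⟫ := by
  have hγv : γ * ‖v‖ ^ 2 ≤ m / 2 * ‖v‖ ^ 2 := by gcongr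
  linarith [hA v, inner_map_self_le_add_of_norm_sub_le hH v]

theorem inner_map_self_le_mul_of_norm_sub_le {A H : E →L[ℝ] E} {m γ : ℝ} (hm : 0 < m)
    (hA : ∀ v, m * ‖v‖ ^ 2 ≤ ⟪A v, v⟫) (hH : ‖H - A‖ ≤ γ) (hγ : γ ≤ m / 2) (v : E) :
    ⟪A v, v⟫ ≤ ⟪H v, v⟫ * (1 + 2 * γ / m) := by
  have hγ0 : 0 ≤ γ := (norm_nonneg _).trans hH
  have hnorm : ‖v‖ ^ 2 ≤ 2 / m * ⟪H v, v⟫ := by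
    rw [div_mul_eq_mul_div, le_div_iff₀ hm]
    linarith [half_mul_sq_norm_le_inner_map_self_of_norm_sub_le hA hH hγ v]
  calc ⟪A v, v⟫ ≤ ⟪H v, v⟫ + γ * ‖v‖ ^ 2 := inner_map_self_le_add_of_norm_sub_le hH v
    _ ≤ ⟪H v, v⟫ + γ * (2 / m * ⟪H v, v⟫) := by gcongr
    _ = ⟪H v, v⟫ * (1 + 2 * γ / m) := by ring

theorem isInvertible_of_coercive_s7 [CompleteSpace E] {T : E →L[ℝ] E} {c : ℝ} (hc : 0 < c)
    (hT : ∀ v, c * ‖v‖ ^ 2 ≤ ⟪T v, v⟫) : T.IsInvertible := by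
  have hB : IsCoercive ((innerSL ℝ).comp T) := ⟨c, hc, fun v => by simpa [sq, mul_assoc] using hT v⟩
  refine ⟨hB.continuousLinearEquivOfBilin, ext fun v => ext_inner_right ℝ fun w => ?_⟩
  simp [hB.continuousLinearEquivOfBilin_apply]

end ContinuousLinearMap

theorem noisy_newton_hessian_quadratic_form_general {p : ℕ} (f : EuclideanSpace ℝ (Fin p) → ℝ)
    (m γh : ℝ) (hm : 0 < m)
    (hconv : ∀ θ' v : EuclideanSpace ℝ (Fin p), m * ‖v‖ ^ 2 ≤ ⟪hessianOf f θ' v, v⟫)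
    (θ : EuclideanSpace ℝ (Fin p))
    (g : EuclideanSpace ℝ (Fin p))
    (H : EuclideanSpace ℝ (Fin p) →L[ℝ] EuclideanSpace ℝ (Fin p))
    (hH : ‖H - hessianOf f θ‖ ≤ γh) (hγhm : γh ≤ m / 2)
    (Δ : EuclideanSpace ℝ (Fin p)) (hΔ : Δ = -(H.inverse g))
    (lam2 : ℝ) (hlam2 : lam2 = ⟪g, H.inverse g⟫) :
    ⟪hessianOf f θ Δ, Δ⟫ ≤ lam2 * (1 + 2 * γh / m) := by
  have hcoer : ∀ v, m / 2 * ‖v‖ ^ 2 ≤ ⟪H v, v⟫ :=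
    ContinuousLinearMap.half_mul_sq_norm_le_inner_map_self_of_norm_sub_le (hconv θ) hH hγhm
  have hHg : H (H.inverse g) = g :=
    (ContinuousLinearMap.isInvertible_of_coercive_s7 (half_pos hm) hcoer).self_apply_inverse g
  calc ⟪hessianOf f θ Δ, Δ⟫ = ⟪hessianOf f θ (H.inverse g), H.inverse g⟫ := by
        rw [hΔ, map_neg, inner_neg_neg]
    _ ≤ ⟪H (H.inverse g), H.inverse g⟫ * (1 + 2 * γh / m) :=
        ContinuousLinearMap.inner_map_self_le_mul_of_norm_sub_le hm (hconv θ) hH hγhm _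
    _ = lam2 * (1 + 2 * γh / m) := by rw [hHg, hlam2]

/-- the Hessian quadratic form along the noisy Newton step is close
to the noisy Newton decrement. -/
theorem noisy_newton_hessian_quadratic_form {p : ℕ} (f : EuclideanSpace ℝ (Fin p) → ℝ)
    (m γh : ℝ) (hm : 0 < m)
    (hf : ContDiff ℝ 2 f)
    (hconv : ∀ θ' v : EuclideanSpace ℝ (Fin p), m * ‖v‖ ^ 2 ≤ ⟪hessianOf f θ' v, v⟫)
    (θ : EuclideanSpace ℝ (Fin p))
    (g : EuclideanSpace ℝ (Fin p))
    (H : EuclideanSpace ℝ (Fin p) →L[ℝ] EuclideanSpace ℝ (Fin p))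
    (hH : ‖H - hessianOf f θ‖ ≤ γh) (hγhm : γh ≤ m / 2)
    (Δ : EuclideanSpace ℝ (Fin p)) (hΔ : Δ = -(H.inverse g))
    (lam2 : ℝ) (hlam2 : lam2 = ⟪g, H.inverse g⟫) :
    ⟪hessianOf f θ Δ, Δ⟫ ≤ lam2 * (1 + 2 * γh / m) :=
  noisy_newton_hessian_quadratic_form_general f m γh hm hconv θ g H hH hγhm Δ hΔ lam2 hlam2
end

section
/- Let f : ℝ^p → ℝ be twice continuously differentiable with m·I ⪯ ∇²f(θ) ⪯ M·I for all θ (0 < m ≤ M), and fix κ₁ ∈ (0, 1/2), κ₂ ∈ (0, 1), η > 0, ζ > 0. Let θ ∈ ℝ^p, and suppose g(θ) ∈ ℝ^p and H(θ) ∈ ℝ^{p×p} satisfy ‖g(θ)‖₂ ≥ η/2 and ‖H(θ) − ∇²f(θ)‖₂ ≤ γ_h ≤ m/2. Set Δθ_nt = −H(θ)⁻¹g(θ) and λ̃(θ)² = g(θ)ᵀH(θ)⁻¹g(θ). Let f̃ : ℝ^p → ℝ satisfy |f̃(φ) − f(φ)| ≤ ζ/4 at φ = θ and φ = θ + α·Δθ_nt.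 Suppose α satisfies α ≥ κ₂·(m/M)·(1/2 − κ₁) together with the linesearch exit condition f̃(θ + α·Δθ_nt) ≤ f̃(θ) + κ₁·α·g(θ)ᵀΔθ_nt + ζ. Define γ' = κ₁·κ₂·(m/M)·(1/2 − κ₁)·η²/(4(M + γ_h)) and suppose ζ ≤ γ'/3. Then f(θ + α·Δθ_nt) ≤ f(θ) − γ'/2. -/
open scoped RealInnerProductSpace

/-!
The perturbed Hessian `H` need not be symmetric, so `λ̃² ≥ ‖g‖² / (M + γh)` is not read off its
spectrum but from its distance to a multiple of the identity. With `c = (M + γh) / 2`, the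
symmetric operator `∇²f(θ) - c` has quadratic form between `m - c ≥ -(c - γh)` and
`M - c = c - γh`, so `‖H - c‖ ≤ (c - γh) + γh = c`, which amounts to `‖H u‖² ≤ 2c ⟪H u, u⟫`;
take `u = H⁻¹ g`. The linesearch exit condition, with the two `ζ / 4` errors of `f̃` and
`ζ ≤ γ' / 3`, then turns the model decrease `κ₁ α λ̃² ≥ γ'` into a decrease `γ' / 2` of `f`.
-/

lemma inner_hessianOf_apply {p : ℕ} (f : EuclideanSpace ℝ (Fin p) → ℝ)
    (θ v w : EuclideanSpace ℝ (Fin p)) :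
    ⟪hessianOf f θ v, w⟫ = fderiv ℝ (fderiv ℝ f) θ v w := by
  have hgrad : gradient f =
      (InnerProductSpace.toDual ℝ _).symm.toContinuousLinearEquiv ∘ fderiv ℝ f := rfl
  rw [hessianOf, hgrad, ContinuousLinearEquiv.comp_fderiv]
  exact InnerProductSpace.toDual_symm_apply

lemma isSymmetric_hessianOf {p : ℕ} {f : EuclideanSpace ℝ (Fin p) → ℝ} (hf : ContDiff ℝ 2 f)
    (θ : EuclideanSpace ℝ (Fin p)) :
    (hessianOf f θ : EuclideanSpace ℝ (Fin p) →ₗ[ℝ] EuclideanSpace ℝ (Fin p)).IsSymmetric := by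
  intro v w
  have hsymm : IsSymmSndFDerivAt ℝ f θ :=
    hf.contDiffAt.isSymmSndFDerivAt (by simp [minSmoothness_of_isRCLikeNormedField])
  rw [ContinuousLinearMap.coe_coe, ← real_inner_comm v, inner_hessianOf_apply,
    inner_hessianOf_apply, hsymm.eq]

namespace ContinuousLinearMap

variable {E : Type*} [NormedAddCommGroup E] [InnerProductSpace ℝ E]

lemma norm_le_of_abs_inner_le {T : E →L[ℝ] E} (hT : (T : E →ₗ[ℝ] E).IsSymmetric) {r : ℝ}
    (hr : 0 ≤ r) (h : ∀ x, |⟪T x, x⟫| ≤ r * ‖x‖ ^ 2) : ‖T‖ ≤ r := by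
  rw [T.norm_eq_iSup_rayleighQuotient hT]
  refine ciSup_le fun x => ?_
  rcases eq_or_ne x 0 with rfl | hx
  · simpa using hr
  · rw [rayleighQuotient, reApplyInnerSelf_apply, abs_div, abs_sq, div_le_iff₀ (by positivity)]
    exact h x

lemma norm_sq_apply_le_of_norm_sub_smul_one_le {H : E →L[ℝ] E} {c : ℝ}
    (h : ‖H - c • (1 : E →L[ℝ] E)‖ ≤ c) (u : E) : ‖H u‖ ^ 2 ≤ 2 * c * ⟪H u, u⟫ := by
  have hc : 0 ≤ c := (norm_nonneg _).trans h
  have hle : ‖H u - c • u‖ ≤ c * ‖u‖ := by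
    simpa using ((H - c • (1 : E →L[ℝ] E)).le_opNorm u).trans
      (mul_le_mul_of_nonneg_right h (norm_nonneg u))
  have hsq := pow_le_pow_left₀ (norm_nonneg _) hle 2
  rw [norm_sub_sq_real, real_inner_smul_right, norm_smul, Real.norm_of_nonneg hc] at hsq
  nlinarith

lemma sub_mul_norm_sq_le_inner_of_norm_sub_le {A H : E →L[ℝ] E} {m γ : ℝ}
    (hA : ∀ v, m * ‖v‖ ^ 2 ≤ ⟪A v, v⟫) (hH : ‖H - A‖ ≤ γ) (v : E) :
    (m - γ) * ‖v‖ ^ 2 ≤ ⟪H v, v⟫ := by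
  have hpert : |⟪(H - A) v, v⟫| ≤ γ * ‖v‖ ^ 2 := by
    calc |⟪(H - A) v, v⟫| ≤ ‖(H - A) v‖ * ‖v‖ := abs_real_inner_le_norm _ _
      _ ≤ ‖H - A‖ * ‖v‖ * ‖v‖ := by gcongr; exact (H - A).le_opNorm v
      _ ≤ γ * ‖v‖ ^ 2 := by rw [mul_assoc, ← sq]; gcongr
  have hsplit : ⟪H v, v⟫ = ⟪A v, v⟫ + ⟪(H - A) v, v⟫ := by
    rw [sub_apply, inner_sub_left]; ring
  linarith [hA v, neg_abs_le ⟪(H - A) v, v⟫]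

variable [FiniteDimensional ℝ E]

lemma isInvertible_of_coercive_s9 {H : E →L[ℝ] E} {c : ℝ} (hc : 0 < c)
    (hH : ∀ v, c * ‖v‖ ^ 2 ≤ ⟪H v, v⟫) : H.IsInvertible := by
  have hinj : Function.Injective (H : E →ₗ[ℝ] E) := by
    refine (injective_iff_map_eq_zero _).mpr fun v hv => ?_
    by_contra hv0
    have hcoer := hH v
    rw [coe_coe] at hv
    rw [hv, inner_zero_left] at hcoer
    linarith [mul_pos hc (pow_pos (norm_pos_iff.mpr hv0) 2)]
  exact ⟨(LinearEquiv.ofInjectiveEndo _ hinj).toContinuousLinearEquiv, by ext; rfl⟩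

lemma norm_sq_le_mul_inner_inverse_of_norm_sub_le {A H : E →L[ℝ] E}
    (hA : (A : E →ₗ[ℝ] E).IsSymmetric) {m M γ : ℝ} (hmM : m ≤ M)
    (hlo : ∀ v, m * ‖v‖ ^ 2 ≤ ⟪A v, v⟫) (hhi : ∀ v, ⟪A v, v⟫ ≤ M * ‖v‖ ^ 2)
    (hH : ‖H - A‖ ≤ γ) (hγm : γ < m) (g : E) :
    ‖g‖ ^ 2 ≤ (M + γ) * ⟪g, H.inverse g⟫ := by
  set c := (M + γ) / 2 with hc
  have hγ : 0 ≤ γ := (norm_nonneg _).trans hH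
  have hAc : ‖A - c • (1 : E →L[ℝ] E)‖ ≤ c - γ := by
    have hsymm : ((A - c • (1 : E →L[ℝ] E) : E →L[ℝ] E) : E →ₗ[ℝ] E).IsSymmetric := by
      rw [toLinearMap_sub, toLinearMap_smul, toLinearMap_one]
      exact hA.sub (LinearMap.IsSymmetric.one.smul (conj_trivial c))
    refine norm_le_of_abs_inner_le hsymm (by linarith) fun x => abs_le.mpr ?_
    have hx : ⟪(A - c • (1 : E →L[ℝ] E)) x, x⟫ = ⟪A x, x⟫ - c * ‖x‖ ^ 2 := by
      rw [sub_apply, inner_sub_left, smul_apply, real_inner_smul_left, one_apply_eq_self,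
        real_inner_self_eq_norm_sq]
    rw [hx]
    constructor <;> nlinarith [hlo x, hhi x, sq_nonneg ‖x‖]
  have hHc : ‖H - c • (1 : E →L[ℝ] E)‖ ≤ c := by
    calc ‖H - c • (1 : E →L[ℝ] E)‖ = ‖(A - c • (1 : E →L[ℝ] E)) + (H - A)‖ := by congr 1; abel
      _ ≤ (c - γ) + γ := (norm_add_le _ _).trans (add_le_add hAc hH)
      _ = c := sub_add_cancel c γ
  have hinv : H.IsInvertible :=
    isInvertible_of_coercive_s9 (sub_pos.mpr hγm) (sub_mul_norm_sq_le_inner_of_norm_sub_le hlo hH)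
  have := norm_sq_apply_le_of_norm_sub_smul_one_le hHc (H.inverse g)
  rwa [hinv.self_apply_inverse, hc, mul_div_cancel₀ _ two_ne_zero] at this

end ContinuousLinearMap

theorem damped_newton_decrease_general {p : ℕ} (f : EuclideanSpace ℝ (Fin p) → ℝ)
    (m M κ₁ κ₂ η ζ γh γ' α : ℝ) (hm : 0 < m) (hmM : m ≤ M)
    (hκ₁ : κ₁ ∈ Set.Ioo (0 : ℝ) (1 / 2)) (hκ₂ : κ₂ ∈ Set.Ioo (0 : ℝ) 1)
    (hη : 0 < η)
    (hf : ContDiff ℝ 2 f)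
    (hconv : ∀ θ' v : EuclideanSpace ℝ (Fin p), m * ‖v‖ ^ 2 ≤ ⟪hessianOf f θ' v, v⟫)
    (hsmooth : ∀ θ' v : EuclideanSpace ℝ (Fin p), ⟪hessianOf f θ' v, v⟫ ≤ M * ‖v‖ ^ 2)
    (θ : EuclideanSpace ℝ (Fin p))
    (g : EuclideanSpace ℝ (Fin p))
    (H : EuclideanSpace ℝ (Fin p) →L[ℝ] EuclideanSpace ℝ (Fin p))
    (hgnorm : η / 2 ≤ ‖g‖) (hH : ‖H - hessianOf f θ‖ ≤ γh) (hγhm : γh ≤ m / 2)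
    (Δ : EuclideanSpace ℝ (Fin p)) (hΔ : Δ = -(H.inverse g))
    (ftil : EuclideanSpace ℝ (Fin p) → ℝ)
    (hftil₁ : |ftil θ - f θ| ≤ ζ / 4)
    (hftil₂ : |ftil (θ + α • Δ) - f (θ + α • Δ)| ≤ ζ / 4)
    (hα : κ₂ * (m / M) * (1 / 2 - κ₁) ≤ α)
    (hexit : ftil (θ + α • Δ) ≤ ftil θ + κ₁ * α * ⟪g, Δ⟫ + ζ)
    (hγ' : γ' = κ₁ * κ₂ * (m / M) * (1 / 2 - κ₁) * η ^ 2 / (4 * (M + γh)))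
    (hζ : ζ ≤ γ' / 3) :
    f (θ + α • Δ) ≤ f θ - γ' / 2 := by
  obtain ⟨hκ₁0, hκ₁half⟩ := hκ₁
  have hκ₂0 : 0 < κ₂ := hκ₂.1
  have hMγ : 0 < M + γh := by linarith [(norm_nonneg _).trans hH]
  set decSq := ⟪g, H.inverse g⟫
  have hstep : ⟪g, Δ⟫ = -decSq := by rw [hΔ, inner_neg_right]
  have hdecr : ‖g‖ ^ 2 ≤ (M + γh) * decSq :=
    ContinuousLinearMap.norm_sq_le_mul_inner_inverse_of_norm_sub_le (isSymmetric_hessianOf hf θ)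
      hmM (hconv θ) (hsmooth θ) hH (by linarith) g
  have hdecSq : η ^ 2 / (4 * (M + γh)) ≤ decSq := by
    rw [div_le_iff₀ (by positivity)]
    nlinarith [pow_le_pow_left₀ (by positivity) hgnorm 2]
  have hmodel : γ' ≤ κ₁ * α * decSq := by
    have hβ : 0 ≤ κ₂ * (m / M) * (1 / 2 - κ₁) := by
      have hmM' : 0 < m / M := div_pos hm (hm.trans_le hmM)
      have hκ₁' : 0 < 1 / 2 - κ₁ := by linarith
      positivity
    have hα0 : 0 ≤ α := hβ.trans hα
    calc γ' = κ₁ * (κ₂ * (m / M) * (1 / 2 - κ₁)) * (η ^ 2 / (4 * (M + γh))) := by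
          rw [hγ']; ring
      _ ≤ κ₁ * α * decSq := by gcongr
  rw [hstep] at hexit
  linarith [abs_le.mp hftil₁, abs_le.mp hftil₂]

/-- in the damped Newton phase, an accepted backtracking stepsize
decreases the true objective by at least `γ'/2`. -/
theorem damped_newton_decrease {p : ℕ} (f : EuclideanSpace ℝ (Fin p) → ℝ)
    (m M κ₁ κ₂ η ζ γh γ' α : ℝ) (hm : 0 < m) (hmM : m ≤ M)
    (hκ₁ : κ₁ ∈ Set.Ioo (0 : ℝ) (1 / 2)) (hκ₂ : κ₂ ∈ Set.Ioo (0 : ℝ) 1)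
    (hη : 0 < η) (hζpos : 0 < ζ)
    (hf : ContDiff ℝ 2 f)
    (hconv : ∀ θ' v : EuclideanSpace ℝ (Fin p), m * ‖v‖ ^ 2 ≤ ⟪hessianOf f θ' v, v⟫)
    (hsmooth : ∀ θ' v : EuclideanSpace ℝ (Fin p), ⟪hessianOf f θ' v, v⟫ ≤ M * ‖v‖ ^ 2)
    (θ : EuclideanSpace ℝ (Fin p))
    (g : EuclideanSpace ℝ (Fin p))
    (H : EuclideanSpace ℝ (Fin p) →L[ℝ] EuclideanSpace ℝ (Fin p))
    (hgnorm : η / 2 ≤ ‖g‖) (hH : ‖H - hessianOf f θ‖ ≤ γh) (hγhm : γh ≤ m / 2)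
    (Δ : EuclideanSpace ℝ (Fin p)) (hΔ : Δ = -(H.inverse g))
    (ftil : EuclideanSpace ℝ (Fin p) → ℝ)
    (hftil₁ : |ftil θ - f θ| ≤ ζ / 4)
    (hftil₂ : |ftil (θ + α • Δ) - f (θ + α • Δ)| ≤ ζ / 4)
    (hα : κ₂ * (m / M) * (1 / 2 - κ₁) ≤ α)
    (hexit : ftil (θ + α • Δ) ≤ ftil θ + κ₁ * α * ⟪g, Δ⟫ + ζ)
    (hγ' : γ' = κ₁ * κ₂ * (m / M) * (1 / 2 - κ₁) * η ^ 2 / (4 * (M + γh)))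
    (hζ : ζ ≤ γ' / 3) :
    f (θ + α • Δ) ≤ f θ - γ' / 2 :=
  damped_newton_decrease_general f m M κ₁ κ₂ η ζ γh γ' α hm hmM hκ₁ hκ₂ hη hf hconv hsmooth θ g H
    hgnorm hH hγhm Δ hΔ ftil hftil₁ hftil₂ hα hexit hγ' hζ
end

section
/- Let x be a random vector in ℝ^p with E[x] = 0, finite covariance matrix Σ_x, finite fourth moments, and bounded fourth moments with constant C̃₄, and let Φ : ℝ → ℝ be twice differentiable with ‖Φ''‖_∞ ≤ M̄_{Φ,2}. Fix θ ∈ ℝ^p and let Y = Φ''(xᵀθ) x xᵀ ∈ ℝ^{p×p}. Then the trace of the covariance of the entries of Y satisfies E[‖Y − E[Y]‖_F²] ≤ E[‖Y‖_F²] ≤ M̄_{Φ,2}² · C̃₄ · p² · ‖Σ_x‖₂². -/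
/-!
Entrywise, `E[(Y - E Y)²] = Var Y ≤ E[Y²]`, which gives the first inequality. For the second,
`‖Φ''(xᵀθ) x xᵀ‖_F² = Φ''(xᵀθ)² ‖x‖⁴ ≤ M̄² p ∑ᵢ xᵢ⁴` by Cauchy–Schwarz, and each coordinate
fourth moment is bounded through the fourth-moment condition in the direction `eᵢ`:
`E[xᵢ⁴] ≤ C̃₄ ⟨Σ eᵢ, eᵢ⟩² ≤ C̃₄ ‖Σ‖²`.
-/

open MeasureTheory ProbabilityTheory
open scoped RealInnerProductSpace

theorem sum_sum_sq_mul_mul_le {ι : Type*} [Fintype ι] {a M : ℝ} (ha : |a| ≤ M)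
    (v : ι → ℝ) :
    ∑ i, ∑ j, (a * v i * v j) ^ 2 ≤ M ^ 2 * Fintype.card ι * ∑ i, v i ^ 4 := by
  have haM : a ^ 2 ≤ M ^ 2 := sq_le_sq' (abs_le.1 ha).1 (abs_le.1 ha).2
  calc ∑ i, ∑ j, (a * v i * v j) ^ 2 = a ^ 2 * (∑ i, v i ^ 2) ^ 2 := by
        rw [sq (∑ i, v i ^ 2), Finset.sum_mul_sum, Finset.mul_sum]
        refine Finset.sum_congr rfl fun i _ => ?_
        rw [Finset.mul_sum]
        exact Finset.sum_congr rfl fun j _ => by ring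
    _ ≤ M ^ 2 * (Fintype.card ι * ∑ i, (v i ^ 2) ^ 2) := by
        gcongr
        exact sq_sum_le_card_mul_sum_sq
    _ = M ^ 2 * Fintype.card ι * ∑ i, v i ^ 4 := by simp only [← pow_mul]; ring

theorem inner_apply_self_sq_le_opNorm_sq {E : Type*} [NormedAddCommGroup E]
    [InnerProductSpace ℝ E] (T : E →L[ℝ] E) {v : E} (hv : ‖v‖ = 1) :
    ⟪T v, v⟫ ^ 2 ≤ ‖T‖ ^ 2 := by
  have h : |⟪T v, v⟫| ≤ ‖T‖ :=
    calc |⟪T v, v⟫| ≤ ‖T v‖ * ‖v‖ := abs_real_inner_le_norm _ _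
      _ ≤ ‖T‖ * ‖v‖ * ‖v‖ := by gcongr; exact T.le_opNorm v
      _ = ‖T‖ := by rw [hv, mul_one, mul_one]
  simpa only [sq_abs] using pow_le_pow_left₀ (abs_nonneg _) h 2

section Moments

variable {Ω : Type*} [MeasurableSpace Ω] {μ : Measure Ω}

theorem memLp_two_of_sq_le {Z g : Ω → ℝ} (hZ : AEStronglyMeasurable Z μ)
    (hg : Integrable g μ) (hle : ∀ ω, Z ω ^ 2 ≤ g ω) : MemLp Z 2 μ :=
  (memLp_two_iff_integrable_sq hZ).2 <| hg.mono' (hZ.pow 2) <| ae_of_all _ fun ω => by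
    simpa only [Real.norm_eq_abs, abs_pow, sq_abs] using hle ω

theorem integrable_apply_pow_four {ι : Type*} [Fintype ι] {x : Ω → EuclideanSpace ℝ ι}
    (hx : AEStronglyMeasurable x μ) (hx4 : Integrable (fun ω => ‖x ω‖ ^ 4) μ) (i : ι) :
    Integrable (fun ω => x ω i ^ 4) μ :=
  hx4.mono' (((PiLp.continuous_apply 2 _ i).comp_aestronglyMeasurable hx).pow 4) <|
    ae_of_all _ fun ω => by
      simpa only [Real.norm_eq_abs, abs_pow] using
        pow_le_pow_left₀ (abs_nonneg _) (PiLp.norm_apply_le (x ω) i) 4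

theorem integral_sum_sq_sub_integral_le [IsProbabilityMeasure μ] {ι : Type*} [Fintype ι]
    {X : ι → Ω → ℝ} (hX : ∀ i, MemLp (X i) 2 μ) :
    ∫ ω, ∑ i, (X i ω - ∫ ω', X i ω' ∂μ) ^ 2 ∂μ ≤ ∫ ω, ∑ i, X i ω ^ 2 ∂μ := by
  have hcentered i : MemLp (fun ω => X i ω - ∫ ω', X i ω' ∂μ) 2 μ :=
    (hX i).sub (memLp_const _)
  rw [integral_finsetSum _ fun i _ => (hcentered i).integrable_sq,
    integral_finsetSum _ fun i _ => (hX i).integrable_sq]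
  refine Finset.sum_le_sum fun i _ => ?_
  rw [← variance_eq_integral (hX i).aestronglyMeasurable.aemeasurable]
  exact variance_le_expectation_sq (hX i).aestronglyMeasurable

theorem integral_apply_pow_four_le {ι : Type*} [Fintype ι] {x : Ω → EuclideanSpace ℝ ι}
    {C : ℝ} (hC : 0 ≤ C) (T : EuclideanSpace ℝ ι →L[ℝ] EuclideanSpace ℝ ι)
    (hcov : ∀ v, ∫ ω, ⟪x ω, v⟫ ^ 2 ∂μ = ⟪T v, v⟫)
    (h4 : ∀ v, ‖v‖ = 1 → ∫ ω, ⟪x ω, v⟫ ^ 4 ∂μ ≤ C * (∫ ω, ⟪x ω, v⟫ ^ 2 ∂μ) ^ 2) (i : ι) :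
    ∫ ω, x ω i ^ 4 ∂μ ≤ C * ‖T‖ ^ 2 := by
  classical
  set e := EuclideanSpace.single i (1 : ℝ)
  have he : ‖e‖ = 1 := by simp [e]
  calc ∫ ω, x ω i ^ 4 ∂μ = ∫ ω, ⟪x ω, e⟫ ^ 4 ∂μ := by
        simp [e, EuclideanSpace.inner_single_right]
    _ ≤ C * ⟪T e, e⟫ ^ 2 := by simpa only [hcov] using h4 e he
    _ ≤ C * ‖T‖ ^ 2 := mul_le_mul_of_nonneg_left (inner_apply_self_sq_le_opNorm_sq T he) hC

end Moments

theorem glm_flattened_hessian_trace_cov_bound_general {p : ℕ} {Ω : Type*} [MeasurableSpace Ω]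
    (μ : Measure Ω) [IsProbabilityMeasure μ]
    (x : Ω → EuclideanSpace ℝ (Fin p)) (hx : Measurable x)
    (C4 M2 : ℝ) (hC4 : 0 < C4)
    (hxint : Integrable (fun ω => ‖x ω‖ ^ 4) μ)
    (covX : EuclideanSpace ℝ (Fin p) →L[ℝ] EuclideanSpace ℝ (Fin p))
    (hcov : ∀ v : EuclideanSpace ℝ (Fin p), (∫ ω, ⟪x ω, v⟫ ^ 2 ∂μ) = ⟪covX v, v⟫)
    (h4 : ∀ v : EuclideanSpace ℝ (Fin p), ‖v‖ = 1 →
      (∫ ω, ⟪x ω, v⟫ ^ 4 ∂μ) ≤ C4 * (∫ ω, ⟪x ω, v⟫ ^ 2 ∂μ) ^ 2)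
    (Φ : ℝ → ℝ)
    (hM2 : ∀ u : ℝ, |deriv (deriv Φ) u| ≤ M2)
    (θ : EuclideanSpace ℝ (Fin p))
    (Y : Ω → Matrix (Fin p) (Fin p) ℝ)
    (hY : ∀ ω i j, Y ω i j = deriv (deriv Φ) ⟪x ω, θ⟫ * x ω i * x ω j) :
    (∫ ω, ∑ i, ∑ j, (Y ω i j - ∫ ω', Y ω' i j ∂μ) ^ 2 ∂μ)
      ≤ (∫ ω, ∑ i, ∑ j, (Y ω i j) ^ 2 ∂μ) ∧
    (∫ ω, ∑ i, ∑ j, (Y ω i j) ^ 2 ∂μ) ≤ M2 ^ 2 * C4 * (p : ℝ) ^ 2 * ‖covX‖ ^ 2 := by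
  have hx4 := integrable_apply_pow_four hx.aestronglyMeasurable hxint
  have hpointwise ω : ∑ i, ∑ j, Y ω i j ^ 2 ≤ M2 ^ 2 * p * ∑ i, x ω i ^ 4 := by
    simpa only [hY, Fintype.card_fin] using sum_sum_sq_mul_mul_le (hM2 _) (x ω)
  have hdom : Integrable (fun ω => M2 ^ 2 * p * ∑ i, x ω i ^ 4) μ :=
    (integrable_finsetSum _ fun i _ => hx4 i).const_mul _
  have hYL2 i j : MemLp (fun ω => Y ω i j) 2 μ := by
    refine memLp_two_of_sq_le ?_ hdom fun ω => le_trans ?_ (hpointwise ω)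
    · have hΦ'' : Measurable (deriv (deriv Φ)) := measurable_deriv _
      simp only [hY]
      fun_prop
    · calc Y ω i j ^ 2 ≤ ∑ j', Y ω i j' ^ 2 :=
            Finset.single_le_sum (fun _ _ => sq_nonneg _) (Finset.mem_univ j)
        _ ≤ ∑ i', ∑ j', Y ω i' j' ^ 2 :=
            Finset.single_le_sum (f := fun i' => ∑ j', Y ω i' j' ^ 2)
              (fun _ _ => by positivity) (Finset.mem_univ i)
  refine ⟨?_, ?_⟩
  · simpa only [Fintype.sum_prod_type] using integral_sum_sq_sub_integral_le
      (X := fun (ij : Fin p × Fin p) ω => Y ω ij.1 ij.2) fun ij => hYL2 ij.1 ij.2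
  · calc ∫ ω, ∑ i, ∑ j, Y ω i j ^ 2 ∂μ ≤ ∫ ω, M2 ^ 2 * p * ∑ i, x ω i ^ 4 ∂μ :=
          integral_mono_of_nonneg (ae_of_all _ fun ω => by positivity) hdom
            (ae_of_all _ hpointwise)
      _ = M2 ^ 2 * p * ∑ i, ∫ ω, x ω i ^ 4 ∂μ := by
          rw [integral_const_mul, integral_finsetSum _ fun i _ => hx4 i]
      _ ≤ M2 ^ 2 * p * ∑ _i : Fin p, C4 * ‖covX‖ ^ 2 := by
          gcongr with i
          exact integral_apply_pow_four_le hC4.le covX hcov h4 i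
      _ = M2 ^ 2 * C4 * (p : ℝ) ^ 2 * ‖covX‖ ^ 2 := by
          rw [Finset.sum_const, Finset.card_univ, Fintype.card_fin, nsmul_eq_mul]
          ring

/-- bound on the trace of the covariance of the flattened per-sample
GLM Hessian `Y = Φ''(xᵀθ) x xᵀ`, i.e. on `E[‖Y − E[Y]‖_F²] ≤ E[‖Y‖_F²]`,
where `‖·‖_F` is the Frobenius norm (written entrywise). -/
theorem glm_flattened_hessian_trace_cov_bound {p : ℕ} {Ω : Type*} [MeasurableSpace Ω]
    (μ : Measure Ω) [IsProbabilityMeasure μ]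
    (x : Ω → EuclideanSpace ℝ (Fin p)) (hx : Measurable x)
    (C4 M2 : ℝ) (hC4 : 0 < C4)
    (hmean : ∫ ω, x ω ∂μ = 0)
    (hxint : Integrable (fun ω => ‖x ω‖ ^ 4) μ)
    (covX : EuclideanSpace ℝ (Fin p) →L[ℝ] EuclideanSpace ℝ (Fin p))
    (hcov : ∀ v : EuclideanSpace ℝ (Fin p), (∫ ω, ⟪x ω, v⟫ ^ 2 ∂μ) = ⟪covX v, v⟫)
    (h4 : ∀ v : EuclideanSpace ℝ (Fin p), ‖v‖ = 1 →
      (∫ ω, ⟪x ω, v⟫ ^ 4 ∂μ) ≤ C4 * (∫ ω, ⟪x ω, v⟫ ^ 2 ∂μ) ^ 2)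
    (Φ : ℝ → ℝ) (hΦ : ContDiff ℝ 2 Φ)
    (hM2 : ∀ u : ℝ, |deriv (deriv Φ) u| ≤ M2)
    (θ : EuclideanSpace ℝ (Fin p))
    (Y : Ω → Matrix (Fin p) (Fin p) ℝ)
    (hY : ∀ ω i j, Y ω i j = deriv (deriv Φ) ⟪x ω, θ⟫ * x ω i * x ω j) :
    (∫ ω, ∑ i, ∑ j, (Y ω i j - ∫ ω', Y ω' i j ∂μ) ^ 2 ∂μ)
      ≤ (∫ ω, ∑ i, ∑ j, (Y ω i j) ^ 2 ∂μ) ∧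
    (∫ ω, ∑ i, ∑ j, (Y ω i j) ^ 2 ∂μ) ≤ M2 ^ 2 * C4 * (p : ℝ) ^ 2 * ‖covX‖ ^ 2 :=
  glm_flattened_hessian_trace_cov_bound_general μ x hx C4 M2 hC4 hxint covX hcov h4 Φ hM2 θ Y hY
end

section
/- Let x be a random vector in ℝ^p with E[x] = 0, finite fourth moments, finite covariance matrix Σ_x, and bounded fourth moments with constant C̃₄, and let Φ : ℝ → ℝ be twice differentiable with ‖Φ''‖_∞ ≤ M̄_{Φ,2}. Fix θ ∈ ℝ^p and let Y = Φ''(xᵀθ) x xᵀ, so that Y² = (Φ''(xᵀθ))² ‖x‖₂² x xᵀ. Then ‖E[Y²]‖₂ ≤ M̄_{Φ,2}² · √(C̃₄ · E[‖x‖₂⁴]) · λ_max(Σ_x). -/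
/-!
Write `K = √(C₄ E‖x‖⁴)`. For a unit vector `v`, Cauchy–Schwarz and the fourth-moment
condition give `E[‖x‖² ⟪x,v⟫²] ≤ √(E‖x‖⁴) √(E⟪x,v⟫⁴) ≤ K E⟪x,v⟫² ≤ K λ_max`. For unit
vectors `v, w`, bounding `Φ''² ≤ M̄²` and applying Cauchy–Schwarz once more to
`(‖x‖ |⟪x,v⟫|) (‖x‖ |⟪x,w⟫|)` gives `⟪E[Y²] v, w⟫ ≤ M̄² K λ_max`, which bounds the operator norm.
-/

open MeasureTheory
open scoped RealInnerProductSpace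

section

variable {Ω : Type*} [MeasurableSpace Ω] {μ : Measure Ω}

theorem integral_mul_le_sqrt_integral_sq_mul_sqrt_integral_sq {f g : Ω → ℝ}
    (hf : 0 ≤ f) (hg : 0 ≤ g) (hf2 : MemLp f 2 μ) (hg2 : MemLp g 2 μ) :
    ∫ ω, f ω * g ω ∂μ ≤ √(∫ ω, f ω ^ 2 ∂μ) * √(∫ ω, g ω ^ 2 ∂μ) := by
  have hpq : Real.HolderConjugate 2 2 := .two_two
  have h := integral_mul_le_Lp_mul_Lq_of_nonneg hpq (.of_forall hf) (.of_forall hg)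
    (by simpa using hf2) (by simpa using hg2)
  simpa only [Real.sqrt_eq_rpow, Real.rpow_ofNat] using h

variable {E : Type*} [NormedAddCommGroup E] {x : Ω → E}

theorem memLp_two_of_abs_le_mul_norm_sq (hxint : Integrable (fun ω => ‖x ω‖ ^ 4) μ)
    {f : Ω → ℝ} (hf : AEStronglyMeasurable f μ) (c : ℝ) (hfc : ∀ ω, |f ω| ≤ c * ‖x ω‖ ^ 2) :
    MemLp f 2 μ := by
  refine (memLp_two_iff_integrable_sq hf).2 <|
    (hxint.const_mul (c ^ 2)).mono' (hf.pow 2) (.of_forall fun ω => ?_)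
  calc ‖f ω ^ 2‖ = |f ω| ^ 2 := by rw [Real.norm_eq_abs, abs_pow]
    _ ≤ (c * ‖x ω‖ ^ 2) ^ 2 := pow_le_pow_left₀ (abs_nonneg _) (hfc ω) 2
    _ = c ^ 2 * ‖x ω‖ ^ 4 := by ring

variable [InnerProductSpace ℝ E]

theorem real_inner_sq_le_norm_sq_mul_norm_sq (y v : E) : ⟪y, v⟫ ^ 2 ≤ ‖y‖ ^ 2 * ‖v‖ ^ 2 := by
  rw [← sq_abs, ← mul_pow]
  exact pow_le_pow_left₀ (abs_nonneg _) (abs_real_inner_le_norm y v) 2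

theorem integral_norm_sq_mul_inner_sq_le (hx : AEStronglyMeasurable x μ)
    (hxint : Integrable (fun ω => ‖x ω‖ ^ 4) μ) {C : ℝ} (v : E)
    (hv : ∫ ω, ⟪x ω, v⟫ ^ 4 ∂μ ≤ C * (∫ ω, ⟪x ω, v⟫ ^ 2 ∂μ) ^ 2) :
    ∫ ω, ‖x ω‖ ^ 2 * ⟪x ω, v⟫ ^ 2 ∂μ ≤
      √(C * ∫ ω, ‖x ω‖ ^ 4 ∂μ) * ∫ ω, ⟪x ω, v⟫ ^ 2 ∂μ := by
  have hnorm : MemLp (fun ω => ‖x ω‖ ^ 2) 2 μ :=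
    memLp_two_of_abs_le_mul_norm_sq hxint (hx.norm.pow 2) 1 fun ω => by simp
  have hinner : MemLp (fun ω => ⟪x ω, v⟫ ^ 2) 2 μ :=
    memLp_two_of_abs_le_mul_norm_sq hxint ((hx.inner aestronglyMeasurable_const).pow 2)
      (‖v‖ ^ 2) fun ω => by
        rw [abs_pow, sq_abs, mul_comm]; exact real_inner_sq_le_norm_sq_mul_norm_sq _ _
  have hsecond_nonneg : 0 ≤ ∫ ω, ⟪x ω, v⟫ ^ 2 ∂μ := integral_nonneg fun _ => sq_nonneg _
  calc ∫ ω, ‖x ω‖ ^ 2 * ⟪x ω, v⟫ ^ 2 ∂μ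
      ≤ √(∫ ω, (‖x ω‖ ^ 2) ^ 2 ∂μ) * √(∫ ω, (⟪x ω, v⟫ ^ 2) ^ 2 ∂μ) :=
        integral_mul_le_sqrt_integral_sq_mul_sqrt_integral_sq (fun _ => sq_nonneg _)
          (fun _ => sq_nonneg _) hnorm hinner
    _ = √(∫ ω, ‖x ω‖ ^ 4 ∂μ) * √(∫ ω, ⟪x ω, v⟫ ^ 4 ∂μ) := by simp only [← pow_mul]
    _ ≤ √(∫ ω, ‖x ω‖ ^ 4 ∂μ) * √(C * (∫ ω, ⟪x ω, v⟫ ^ 2 ∂μ) ^ 2) := by gcongr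
    _ = √(C * ∫ ω, ‖x ω‖ ^ 4 ∂μ) * ∫ ω, ⟪x ω, v⟫ ^ 2 ∂μ := by
        rw [Real.sqrt_mul' _ (sq_nonneg _), Real.sqrt_sq hsecond_nonneg,
          Real.sqrt_mul' _ (integral_nonneg fun _ => by positivity)]
        ring

theorem abs_integral_sq_mul_norm_sq_mul_inner_mul_inner_le (hx : AEStronglyMeasurable x μ)
    (hxint : Integrable (fun ω => ‖x ω‖ ^ 4) μ) {φ : Ω → ℝ} {M : ℝ} (hφ : ∀ ω, |φ ω| ≤ M)
    (v w : E) :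
    |∫ ω, φ ω ^ 2 * ‖x ω‖ ^ 2 * ⟪x ω, v⟫ * ⟪x ω, w⟫ ∂μ| ≤
      M ^ 2 * (√(∫ ω, ‖x ω‖ ^ 2 * ⟪x ω, v⟫ ^ 2 ∂μ) * √(∫ ω, ‖x ω‖ ^ 2 * ⟪x ω, w⟫ ^ 2 ∂μ)) := by
  have hmemLp (u : E) : MemLp (fun ω => ‖x ω‖ * |⟪x ω, u⟫|) 2 μ :=
    memLp_two_of_abs_le_mul_norm_sq hxint
      (hx.norm.mul (continuous_abs.comp_aestronglyMeasurable (hx.inner aestronglyMeasurable_const)))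
      ‖u‖ fun ω => by
        rw [abs_of_nonneg (by positivity), mul_comm ‖u‖, sq, mul_assoc]
        gcongr
        exact abs_real_inner_le_norm _ _
  have hpointwise (ω : Ω) : ‖φ ω ^ 2 * ‖x ω‖ ^ 2 * ⟪x ω, v⟫ * ⟪x ω, w⟫‖ ≤
      M ^ 2 * ((‖x ω‖ * |⟪x ω, v⟫|) * (‖x ω‖ * |⟪x ω, w⟫|)) := by
    calc ‖φ ω ^ 2 * ‖x ω‖ ^ 2 * ⟪x ω, v⟫ * ⟪x ω, w⟫‖
        = |φ ω| ^ 2 * ((‖x ω‖ * |⟪x ω, v⟫|) * (‖x ω‖ * |⟪x ω, w⟫|)) := by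
          simp only [Real.norm_eq_abs, abs_mul, abs_pow, abs_norm]; ring
      _ ≤ M ^ 2 * ((‖x ω‖ * |⟪x ω, v⟫|) * (‖x ω‖ * |⟪x ω, w⟫|)) := by gcongr; exact hφ ω
  have hsq (u : E) (ω : Ω) : (‖x ω‖ * |⟪x ω, u⟫|) ^ 2 = ‖x ω‖ ^ 2 * ⟪x ω, u⟫ ^ 2 := by
    rw [mul_pow, sq_abs]
  calc |∫ ω, φ ω ^ 2 * ‖x ω‖ ^ 2 * ⟪x ω, v⟫ * ⟪x ω, w⟫ ∂μ|
      ≤ ∫ ω, M ^ 2 * ((‖x ω‖ * |⟪x ω, v⟫|) * (‖x ω‖ * |⟪x ω, w⟫|)) ∂μ :=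
        norm_integral_le_of_norm_le (((hmemLp v).integrable_mul (hmemLp w)).const_mul _)
          (.of_forall hpointwise)
    _ ≤ M ^ 2 * (√(∫ ω, ‖x ω‖ ^ 2 * ⟪x ω, v⟫ ^ 2 ∂μ) * √(∫ ω, ‖x ω‖ ^ 2 * ⟪x ω, w⟫ ^ 2 ∂μ)) := by
        rw [integral_const_mul]
        gcongr
        simpa only [hsq] using integral_mul_le_sqrt_integral_sq_mul_sqrt_integral_sq
          (fun _ => by positivity) (fun _ => by positivity) (hmemLp v) (hmemLp w)

theorem ContinuousLinearMap.inner_apply_self_le_iSup_sphere (T : E →L[ℝ] E) {v : E}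
    (hv : ‖v‖ = 1) : ⟪T v, v⟫ ≤ ⨆ u : {u : E // ‖u‖ = 1}, ⟪T u.1, u.1⟫ := by
  refine le_ciSup (f := fun u : {u : E // ‖u‖ = 1} => ⟪T u.1, u.1⟫) ⟨‖T‖, ?_⟩ ⟨v, hv⟩
  rintro _ ⟨⟨u, hu⟩, rfl⟩
  calc ⟪T u, u⟫ ≤ ‖T u‖ * ‖u‖ := real_inner_le_norm _ _
    _ ≤ ‖T‖ * ‖u‖ * ‖u‖ := by gcongr; exact T.le_opNorm u
    _ = ‖T‖ := by rw [hu]; ring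

end

theorem glm_hessian_second_moment_bound_general {p : ℕ} {Ω : Type*} [MeasurableSpace Ω]
    (μ : Measure Ω)
    (x : Ω → EuclideanSpace ℝ (Fin p)) (hx : Measurable x)
    (C4 M2 : ℝ)
    (hxint : Integrable (fun ω => ‖x ω‖ ^ 4) μ)
    (covX : EuclideanSpace ℝ (Fin p) →L[ℝ] EuclideanSpace ℝ (Fin p))
    (hcov : ∀ v : EuclideanSpace ℝ (Fin p), (∫ ω, ⟪x ω, v⟫ ^ 2 ∂μ) = ⟪covX v, v⟫)
    (h4 : ∀ v : EuclideanSpace ℝ (Fin p), ‖v‖ = 1 →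
      (∫ ω, ⟪x ω, v⟫ ^ 4 ∂μ) ≤ C4 * (∫ ω, ⟪x ω, v⟫ ^ 2 ∂μ) ^ 2)
    (lamMax : ℝ)
    (hlamMax : lamMax = ⨆ v : {v : EuclideanSpace ℝ (Fin p) // ‖v‖ = 1}, ⟪covX v.1, v.1⟫)
    (Φ : ℝ → ℝ)
    (hM2 : ∀ u : ℝ, |deriv (deriv Φ) u| ≤ M2)
    (θ : EuclideanSpace ℝ (Fin p))
    (Ysq : EuclideanSpace ℝ (Fin p) →L[ℝ] EuclideanSpace ℝ (Fin p))
    (hYsq : ∀ v w, ⟪Ysq v, w⟫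
      = ∫ ω, (deriv (deriv Φ) ⟪x ω, θ⟫) ^ 2 * ‖x ω‖ ^ 2 * ⟪x ω, v⟫ * ⟪x ω, w⟫ ∂μ) :
    ‖Ysq‖ ≤ M2 ^ 2 * Real.sqrt (C4 * ∫ ω, ‖x ω‖ ^ 4 ∂μ) * lamMax := by
  set K := √(C4 * ∫ ω, ‖x ω‖ ^ 4 ∂μ)
  have hlamMax_nonneg : 0 ≤ lamMax :=
    hlamMax ▸ Real.iSup_nonneg fun v => hcov v.1 ▸ integral_nonneg fun _ => sq_nonneg _
  have hmixed_moment (v : EuclideanSpace ℝ (Fin p)) (hv : ‖v‖ = 1) :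
      √(∫ ω, ‖x ω‖ ^ 2 * ⟪x ω, v⟫ ^ 2 ∂μ) ≤ √(K * lamMax) := by
    gcongr
    calc ∫ ω, ‖x ω‖ ^ 2 * ⟪x ω, v⟫ ^ 2 ∂μ ≤ K * ⟪covX v, v⟫ :=
          hcov v ▸ integral_norm_sq_mul_inner_sq_le hx.aestronglyMeasurable hxint v (h4 v hv)
      _ ≤ K * lamMax := by gcongr; exact hlamMax ▸ covX.inner_apply_self_le_iSup_sphere hv
  refine (ContinuousLinearMap.opNorm_le_of_re_inner_le (by positivity) fun v w hv hw => ?_).trans_eq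
    (mul_assoc _ _ _).symm
  rw [RCLike.re_to_real, hYsq]
  calc _ ≤ |∫ ω, (deriv (deriv Φ) ⟪x ω, θ⟫) ^ 2 * ‖x ω‖ ^ 2 * ⟪x ω, v⟫ * ⟪x ω, w⟫ ∂μ| :=
        le_abs_self _
    _ ≤ M2 ^ 2 * (√(K * lamMax) * √(K * lamMax)) := by
        grw [abs_integral_sq_mul_norm_sq_mul_inner_mul_inner_le hx.aestronglyMeasurable hxint
          (fun ω => hM2 _) v w, hmixed_moment v hv, hmixed_moment w hw]
    _ = M2 ^ 2 * (K * lamMax) := by rw [Real.mul_self_sqrt (by positivity)]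

/-- matrix second-moment bound for the per-sample GLM Hessian
`Y = Φ''(xᵀθ) x xᵀ`: the operator `E[Y²] = E[(Φ''(xᵀθ))² ‖x‖² x xᵀ]` satisfies
`‖E[Y²]‖₂ ≤ M̄² √(C̃₄ E[‖x‖⁴]) λ_max(Σ_x)`. -/
theorem glm_hessian_second_moment_bound {p : ℕ} {Ω : Type*} [MeasurableSpace Ω]
    (μ : Measure Ω) [IsProbabilityMeasure μ]
    (x : Ω → EuclideanSpace ℝ (Fin p)) (hx : Measurable x)
    (C4 M2 : ℝ) (hC4 : 0 < C4)
    (hmean : ∫ ω, x ω ∂μ = 0)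
    (hxint : Integrable (fun ω => ‖x ω‖ ^ 4) μ)
    (covX : EuclideanSpace ℝ (Fin p) →L[ℝ] EuclideanSpace ℝ (Fin p))
    (hcov : ∀ v : EuclideanSpace ℝ (Fin p), (∫ ω, ⟪x ω, v⟫ ^ 2 ∂μ) = ⟪covX v, v⟫)
    (h4 : ∀ v : EuclideanSpace ℝ (Fin p), ‖v‖ = 1 →
      (∫ ω, ⟪x ω, v⟫ ^ 4 ∂μ) ≤ C4 * (∫ ω, ⟪x ω, v⟫ ^ 2 ∂μ) ^ 2)
    (lamMax : ℝ)
    (hlamMax : lamMax = ⨆ v : {v : EuclideanSpace ℝ (Fin p) // ‖v‖ = 1}, ⟪covX v.1, v.1⟫)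
    (Φ : ℝ → ℝ) (hΦ : ContDiff ℝ 2 Φ)
    (hM2 : ∀ u : ℝ, |deriv (deriv Φ) u| ≤ M2)
    (θ : EuclideanSpace ℝ (Fin p))
    (Ysq : EuclideanSpace ℝ (Fin p) →L[ℝ] EuclideanSpace ℝ (Fin p))
    (hYsq : ∀ v w, ⟪Ysq v, w⟫
      = ∫ ω, (deriv (deriv Φ) ⟪x ω, θ⟫) ^ 2 * ‖x ω‖ ^ 2 * ⟪x ω, v⟫ * ⟪x ω, w⟫ ∂μ) :
    ‖Ysq‖ ≤ M2 ^ 2 * Real.sqrt (C4 * ∫ ω, ‖x ω‖ ^ 4 ∂μ) * lamMax :=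
  glm_hessian_second_moment_bound_general μ x hx C4 M2 hxint covX hcov h4 lamMax hlamMax Φ hM2 θ Ysq
    hYsq
end

section
/- Let f : ℝ^p → ℝ be twice continuously differentiable with L-Lipschitz Hessian. Let θ ∈ ℝ^p, and suppose g(θ) ∈ ℝ^p and H(θ) ∈ ℝ^{p×p} with H(θ) invertible satisfy ‖g(θ) − ∇f(θ)‖₂ ≤ γ_g and ‖H(θ) − ∇²f(θ)‖₂ ≤ γ_h. Then, with Δθ_nt = −H(θ)⁻¹g(θ): ‖∇f(θ + Δθ_nt)‖₂ ≤ (L/2)‖Δθ_nt‖₂² + γ_g + γ_h‖Δθ_nt‖₂. -/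
/-! The Newton identity `g + H Δ = 0` splits `∇f(θ + Δ)` into the Taylor remainder
`∇f(θ + Δ) - ∇f(θ) - ∇²f(θ) Δ`, the gradient error `∇f(θ) - g` and the Hessian error
`(∇²f(θ) - H) Δ`. The last two have norms at most `γg` and `γh ‖Δ‖`. Along the segment
`t ↦ θ + t Δ` the remainder has derivative `(∇²f(θ + t Δ) - ∇²f(θ)) Δ`, of norm at most
`L t ‖Δ‖²`, so by the mean value inequality it is at most `L ‖Δ‖² / 2` at `t = 1`. -/

open scoped RealInnerProductSpace

open Set

section Taylor

variable {E F : Type*} [NormedAddCommGroup E] [NormedSpace ℝ E]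
  [NormedAddCommGroup F] [NormedSpace ℝ F]

theorem norm_sub_sub_fderiv_apply_le_of_lipschitz_fderiv {f : E → F} (hf : Differentiable ℝ f)
    {L : ℝ} (hlip : ∀ x y, ‖fderiv ℝ f x - fderiv ℝ f y‖ ≤ L * ‖x - y‖) (x Δ : E) :
    ‖f (x + Δ) - f x - fderiv ℝ f x Δ‖ ≤ L / 2 * ‖Δ‖ ^ 2 := by
  set φ : ℝ → F := fun t => f (x + t • Δ) - f x - t • fderiv ℝ f x Δ
  have hφ : ∀ t, HasDerivAt φ (fderiv ℝ f (x + t • Δ) Δ - fderiv ℝ f x Δ) t := by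
    intro t
    have hline : HasDerivAt (fun s : ℝ => x + s • Δ) Δ t := by
      simpa using ((hasDerivAt_id t).smul_const Δ).const_add x
    exact (((hf _).hasFDerivAt.comp_hasDerivAt t hline).sub_const (f x)).sub
      (by simpa using (hasDerivAt_id t).smul_const (fderiv ℝ f x Δ))
  have hB : ∀ t, HasDerivAt (fun t : ℝ => L / 2 * ‖Δ‖ ^ 2 * t ^ 2) (L * ‖Δ‖ ^ 2 * t) t :=
    fun t => ((hasDerivAt_pow 2 t).const_mul _).congr_deriv (by push_cast; ring)
  have hbound : ∀ t ∈ Ico (0 : ℝ) 1,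
      ‖fderiv ℝ f (x + t • Δ) Δ - fderiv ℝ f x Δ‖ ≤ L * ‖Δ‖ ^ 2 * t := by
    rintro t ⟨ht, -⟩
    calc ‖fderiv ℝ f (x + t • Δ) Δ - fderiv ℝ f x Δ‖
        ≤ ‖fderiv ℝ f (x + t • Δ) - fderiv ℝ f x‖ * ‖Δ‖ :=
          (fderiv ℝ f (x + t • Δ) - fderiv ℝ f x).le_opNorm Δ
      _ ≤ L * ‖t • Δ‖ * ‖Δ‖ := by
          gcongr
          simpa using hlip (x + t • Δ) x
      _ = L * ‖Δ‖ ^ 2 * t := by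
          rw [norm_smul, Real.norm_of_nonneg ht]; ring
  have hφ1 := image_norm_le_of_norm_deriv_right_le_deriv_boundary
    (fun t _ => (hφ t).continuousAt.continuousWithinAt) (fun t _ => (hφ t).hasDerivWithinAt)
    (by simp [φ]) hB hbound (right_mem_Icc.2 zero_le_one)
  simpa [φ] using hφ1

theorem norm_apply_add_le_of_newton_step {f : E → F} (hf : Differentiable ℝ f)
    {L : ℝ} (hlip : ∀ x y, ‖fderiv ℝ f x - fderiv ℝ f y‖ ≤ L * ‖x - y‖)
    {x Δ : E} {g : F} {H : E →L[ℝ] F} (hstep : g + H Δ = 0) {γg γh : ℝ}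
    (hg : ‖g - f x‖ ≤ γg) (hH : ‖H - fderiv ℝ f x‖ ≤ γh) :
    ‖f (x + Δ)‖ ≤ L / 2 * ‖Δ‖ ^ 2 + γg + γh * ‖Δ‖ := by
  have hsplit : f (x + Δ) = (f (x + Δ) - f x - fderiv ℝ f x Δ) - (g - f x)
      - (H - fderiv ℝ f x) Δ := by
    rw [sub_apply, ← sub_eq_zero, ← hstep]
    abel
  have hH' : ‖(H - fderiv ℝ f x) Δ‖ ≤ γh * ‖Δ‖ :=
    ((H - fderiv ℝ f x).le_opNorm Δ).trans (by gcongr)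
  calc ‖f (x + Δ)‖
      = ‖(f (x + Δ) - f x - fderiv ℝ f x Δ) - (g - f x) - (H - fderiv ℝ f x) Δ‖ :=
        congrArg norm hsplit
    _ ≤ ‖f (x + Δ) - f x - fderiv ℝ f x Δ‖ + ‖g - f x‖ + ‖(H - fderiv ℝ f x) Δ‖ :=
        (norm_sub_le _ _).trans (add_le_add (norm_sub_le _ _) le_rfl)
    _ ≤ L / 2 * ‖Δ‖ ^ 2 + γg + γh * ‖Δ‖ := by
        gcongr
        exact norm_sub_sub_fderiv_apply_le_of_lipschitz_fderiv hf hlip x Δ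

end Taylor

theorem ContDiff.gradient {E : Type*} [NormedAddCommGroup E] [InnerProductSpace ℝ E]
    [CompleteSpace E] {f : E → ℝ} {n : WithTop ℕ∞} (hf : ContDiff ℝ (n + 1) f) :
    ContDiff ℝ n (gradient f) :=
  (InnerProductSpace.toDual ℝ E).symm.toContinuousLinearEquiv.contDiff.comp
    (hf.fderiv_right le_rfl)

theorem noisy_newton_gradient_taylor_bound_general {p : ℕ}
    (f : EuclideanSpace ℝ (Fin p) → ℝ) (hf : ContDiff ℝ 2 f)
    (L γg γh : ℝ)
    (hlip : ∀ θ₁ θ₂ : EuclideanSpace ℝ (Fin p),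
      ‖hessianOf f θ₁ - hessianOf f θ₂‖ ≤ L * ‖θ₁ - θ₂‖)
    (θ : EuclideanSpace ℝ (Fin p))
    (g : EuclideanSpace ℝ (Fin p))
    (H : EuclideanSpace ℝ (Fin p) →L[ℝ] EuclideanSpace ℝ (Fin p))
    (hHinv : ∃ e : EuclideanSpace ℝ (Fin p) ≃L[ℝ] EuclideanSpace ℝ (Fin p),
      (e : EuclideanSpace ℝ (Fin p) →L[ℝ] EuclideanSpace ℝ (Fin p)) = H)
    (hg : ‖g - gradient f θ‖ ≤ γg) (hH : ‖H - hessianOf f θ‖ ≤ γh)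
    (Δ : EuclideanSpace ℝ (Fin p)) (hΔ : Δ = -(H.inverse g)) :
    ‖gradient f (θ + Δ)‖ ≤ L / 2 * ‖Δ‖ ^ 2 + γg + γh * ‖Δ‖ := by
  have hstep : g + H Δ = 0 := by
    rw [hΔ, map_neg, ContinuousLinearMap.IsInvertible.self_apply_inverse hHinv, add_neg_cancel]
  exact norm_apply_add_le_of_newton_step
    ((ContDiff.gradient (n := 1) hf).differentiable one_ne_zero) hlip hstep hg hH

/-- the basic Taylor-type bound on the gradient after a noisy Newton
step, using only Lipschitzness of the Hessian and the estimation errors. -/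
theorem noisy_newton_gradient_taylor_bound {p : ℕ}
    (f : EuclideanSpace ℝ (Fin p) → ℝ) (hf : ContDiff ℝ 2 f)
    (L γg γh : ℝ) (hL : 0 < L)
    (hlip : ∀ θ₁ θ₂ : EuclideanSpace ℝ (Fin p),
      ‖hessianOf f θ₁ - hessianOf f θ₂‖ ≤ L * ‖θ₁ - θ₂‖)
    (θ : EuclideanSpace ℝ (Fin p))
    (g : EuclideanSpace ℝ (Fin p))
    (H : EuclideanSpace ℝ (Fin p) →L[ℝ] EuclideanSpace ℝ (Fin p))
    (hHinv : ∃ e : EuclideanSpace ℝ (Fin p) ≃L[ℝ] EuclideanSpace ℝ (Fin p),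
      (e : EuclideanSpace ℝ (Fin p) →L[ℝ] EuclideanSpace ℝ (Fin p)) = H)
    (hg : ‖g - gradient f θ‖ ≤ γg) (hH : ‖H - hessianOf f θ‖ ≤ γh)
    (Δ : EuclideanSpace ℝ (Fin p)) (hΔ : Δ = -(H.inverse g)) :
    ‖gradient f (θ + Δ)‖ ≤ L / 2 * ‖Δ‖ ^ 2 + γg + γh * ‖Δ‖ :=
  noisy_newton_gradient_taylor_bound_general f hf L γg γh hlip θ g H hHinv hg hH Δ hΔ
end
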